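/- arXiv:2504.06433 — 2 statements merged into one kernel-verified Lean document; each statement's English description precedes it below -/
import Mathlib

section
/- Let n ≥ 2, m ≥ 0, and let C = L_3 ∘ Z_2 ∘ L_2 ∘ Z_1 ∘ L_1 be a depth-2 QAC circuit on 1+n+m qubits that weakly computes ⊕_n. Then the CZ layer Z_2 contains a gate CZ_S with qubit 0 ∈ S and |S| ≥ 2, and the 2×2 unitary applied to qubit 0 in the final single-qubit layer L_3 is not semiclassical. -/
open scoped BigOperators

/-- The state space of `N` qubits: amplitudes indexed by bit strings of length `N`. -/
abbrev QState (N : ℕ) := (Fin N → Bool) → ℂ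

/-- A unit vector (state vector): Euclidean norm 1. -/
def UnitVec {N : ℕ} (ψ : QState N) : Prop := ∑ x, ‖ψ x‖ ^ 2 = 1

/-- The C-SIGN gate on the qubits in `S`: flips the sign of the amplitude exactly
when all bits in `S` are `1`. -/
noncomputable def czGate {N : ℕ} (S : Finset (Fin N)) (ψ : QState N) : QState N :=
  fun x => if ∀ i ∈ S, x i = true then -ψ x else ψ x

/-- A layer of C-SIGN gates on pairwise disjoint sets of qubits, applied in sequence. -/
noncomputable def czLayerAct {N : ℕ} (gs : List (Finset (Fin N))) (ψ : QState N) : QState N :=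
  gs.foldr czGate ψ

/-- Interpret a `Bool` as an index into a `2 × 2` matrix. -/
def bitIdx (b : Bool) : Fin 2 := if b then 1 else 0

/-- A layer of single-qubit gates, one `2 × 2` matrix per qubit, acting on the register. -/
noncomputable def layerAct {N : ℕ} (U : Fin N → Matrix (Fin 2) (Fin 2) ℂ) (ψ : QState N) :
    QState N :=
  fun x => ∑ y : Fin N → Bool, (∏ j, U j (bitIdx (x j)) (bitIdx (y j))) * ψ y

/-- A depth-`d` QAC circuit on `N` qubits: `d + 1` single-qubit layers
`L 0, …, L d` interleaved with `d` CZ layers `Z 0, …, Z (d-1)`;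
the circuit is `L d ∘ Z (d-1) ∘ L (d-1) ∘ ⋯ ∘ Z 0 ∘ L 0`. -/
structure QAC (N d : ℕ) where
  /-- the single-qubit layers (a `2 × 2` unitary for each qubit) -/
  L : Fin (d + 1) → Fin N → Matrix (Fin 2) (Fin 2) ℂ
  hL : ∀ i j, L i j ∈ Matrix.unitaryGroup (Fin 2) ℂ
  /-- the CZ layers: each is a list of pairwise disjoint sets of qubits -/
  Z : Fin d → List (Finset (Fin N))
  hZ : ∀ i, (Z i).Pairwise (fun S T => Disjoint S T)

/-- The action of a QAC circuit on a state. -/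
noncomputable def QAC.act {N d : ℕ} (C : QAC N d) (ψ : QState N) : QState N :=
  layerAct (C.L (Fin.last d))
    ((List.finRange d).foldl
      (fun φ i => czLayerAct (C.Z i) (layerAct (C.L i.castSucc) φ)) ψ)

/-- The target qubit (qubit `0`) in a register of `1 + n + m` qubits. -/
def tgt (n m : ℕ) : Fin (1 + n + m) := ⟨0, by omega⟩

/-- The `i`-th input qubit (qubit `1 + i`). -/
def inp (n m : ℕ) (i : Fin n) : Fin (1 + n + m) := ⟨1 + i.1, by have := i.2; omega⟩

/-- The `j`-th ancilla qubit (qubit `1 + n + j`). -/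
def anc (n m : ℕ) (j : Fin m) : Fin (1 + n + m) := ⟨1 + n + j.1, by have := j.2; omega⟩

/-- The `j`-th non-target qubit (qubit `1 + j`). -/
def nontgt (n m : ℕ) (j : Fin (n + m)) : Fin (1 + n + m) := ⟨1 + j.1, by have := j.2; omega⟩

/-- The set of input qubits. -/
def inputs (n m : ℕ) : Finset (Fin (1 + n + m)) := Finset.univ.image (inp n m)

/-- The parity (mod-2 bit-sum) of a bit string, as a `Bool`. -/
def parityB {n : ℕ} (x : Fin n → Bool) : Bool :=
  decide ((∑ i, if x i then 1 else 0 : ℕ) % 2 = 1)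

/-- The state `|t⟩ ⊗ |x⟩ ⊗ α` of the register. -/
noncomputable def inState (n m : ℕ) (t : Bool) (x : Fin n → Bool) (α : QState m) :
    QState (1 + n + m) :=
  fun y => (if y (tgt n m) = t ∧ (∀ i, y (inp n m i) = x i) then (1 : ℂ) else 0) *
    α (fun j => y (anc n m j))

/-- `C` `α`-computes `⊕ₙ`: for each classical input `x`, the circuit maps
`|0⟩ ⊗ |x⟩ ⊗ α` to `|⊕x⟩ ⊗ φₓ` for some unit vector `φₓ` of the non-target qubits. -/
noncomputable def AlphaComputes (n m : ℕ) {d : ℕ} (C : QAC (1 + n + m) d) (α : QState m) :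
    Prop :=
  ∀ x : Fin n → Bool, ∃ φ : QState (n + m), UnitVec φ ∧
    ∀ y : Fin (1 + n + m) → Bool,
      C.act (inState n m false x α) y =
        (if y (tgt n m) = parityB x then (1 : ℂ) else 0) * φ (fun j => y (nontgt n m j))

/-- `C` weakly computes `⊕ₙ`: it `α`-computes `⊕ₙ` for some unit ancilla state `α`. -/
noncomputable def WeaklyComputes (n m : ℕ) {d : ℕ} (C : QAC (1 + n + m) d) : Prop :=
  ∃ α : QState m, UnitVec α ∧ AlphaComputes n m C α

/-- The all-zeros computational basis state of the ancillas. -/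
noncomputable def zeroAnc (m : ℕ) : QState m :=
  fun z => if z = (fun _ => false) then 1 else 0

/-- `C` computes `⊕ₙ`: it `α`-computes `⊕ₙ` with the all-zeros ancilla state. -/
noncomputable def Computes (n m : ℕ) {d : ℕ} (C : QAC (1 + n + m) d) : Prop :=
  AlphaComputes n m C (zeroAnc m)

/-- A `2 × 2` matrix is semiclassical if it has two zero entries. -/
def Semiclassical (U : Matrix (Fin 2) (Fin 2) ℂ) : Prop :=
  ∃ p q : Fin 2 × Fin 2, p ≠ q ∧ U p.1 p.2 = 0 ∧ U q.1 q.2 = 0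

-- Part I: generic lemmas

noncomputable def czSign {N : ℕ} (gs : List (Finset (Fin N))) (y : Fin N → Bool) : ℂ :=
  (gs.map (fun S => if ∀ i ∈ S, y i = true then (-1 : ℂ) else 1)).prod

lemma czLayerAct_eq_sign {N : ℕ} (gs : List (Finset (Fin N))) (ψ : QState N) (y : Fin N → Bool) :
    czLayerAct gs ψ y = czSign gs y * ψ y := by
  induction gs with
  | nil => simp [czLayerAct, czSign]
  | cons S t ih =>
    simp only [czLayerAct, List.foldr_cons, czSign, List.map_cons, List.prod_cons]
    show czGate S (czLayerAct t ψ) y = _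
    rw [czGate, ih]
    by_cases h : ∀ i ∈ S, y i = true
    · simp only [if_pos h, czSign]; ring
    · simp only [if_neg h, czSign]; ring

lemma czSign_pm {N : ℕ} (gs : List (Finset (Fin N))) (y : Fin N → Bool) :
    czSign gs y = 1 ∨ czSign gs y = -1 := by
  induction gs with
  | nil => left; simp [czSign]
  | cons S t ih =>
    simp only [czSign, List.map_cons, List.prod_cons]
    rcases ih with h2 | h2 <;> simp only [czSign] at h2 <;> rw [h2] <;>
      by_cases h : ∀ i ∈ S, y i = true
    · rw [if_pos h]; right; norm_num
    · rw [if_neg h]; left; norm_num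
    · rw [if_pos h]; left; norm_num
    · rw [if_neg h]; right; norm_num

lemma czSign_ne_zero {N : ℕ} (gs : List (Finset (Fin N))) (y : Fin N → Bool) :
    czSign gs y ≠ 0 := by
  rcases czSign_pm gs y with h | h <;> rw [h] <;> norm_num

lemma boolEquivFin2 : Function.Bijective bitIdx := by
  constructor
  · intro a b h; cases a <;> cases b <;> simp [bitIdx] at h ⊢
  · intro k; fin_cases k
    · exact ⟨false, rfl⟩
    · exact ⟨true, rfl⟩

lemma sum_fin2_eq_sum_bool (f : Fin 2 → ℂ) : ∑ k, f k = ∑ b : Bool, f (bitIdx b) := by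
  rw [Fintype.sum_bijective bitIdx boolEquivFin2 (fun b => f (bitIdx b)) f (fun _ => rfl)]

lemma layerAct_comp {N : ℕ} (A B : Fin N → Matrix (Fin 2) (Fin 2) ℂ) (ψ : QState N) :
    layerAct A (layerAct B ψ) = layerAct (fun j => A j * B j) ψ := by
  funext x
  simp only [layerAct, Finset.mul_sum]
  rw [Finset.sum_comm]
  refine Finset.sum_congr rfl (fun y _ => ?_)
  have : ∀ z : Fin N → Bool,
      (∏ j, A j (bitIdx (x j)) (bitIdx (z j))) * ((∏ j, B j (bitIdx (z j)) (bitIdx (y j))) * ψ y)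
      = (∏ j, (A j (bitIdx (x j)) (bitIdx (z j)) * B j (bitIdx (z j)) (bitIdx (y j)))) * ψ y := by
    intro z; rw [Finset.prod_mul_distrib]; ring
  rw [Finset.sum_congr rfl (fun z _ => this z), ← Finset.sum_mul]
  congr 1
  rw [← Fintype.prod_sum (fun j (s : Bool) => A j (bitIdx (x j)) (bitIdx s) * B j (bitIdx s) (bitIdx (y j)))]
  refine Finset.prod_congr rfl (fun j _ => ?_)
  rw [Matrix.mul_apply, sum_fin2_eq_sum_bool]

lemma layerAct_one {N : ℕ} (ψ : QState N) :
    layerAct (fun _ => (1 : Matrix (Fin 2) (Fin 2) ℂ)) ψ = ψ := by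
  funext x
  simp only [layerAct]
  have key : ∀ y : Fin N → Bool,
      (∏ j, (1 : Matrix (Fin 2) (Fin 2) ℂ) (bitIdx (x j)) (bitIdx (y j))) =
        if y = x then 1 else 0 := by
    intro y
    by_cases h : y = x
    · subst h; simp [Matrix.one_apply]
    · obtain ⟨j, hj⟩ : ∃ j, y j ≠ x j := by
        by_contra hc; push_neg at hc; exact h (funext hc)
      rw [Finset.prod_eq_zero (Finset.mem_univ j)]
      · simp [h]
      · rw [Matrix.one_apply_ne]
        intro he
        exact hj (boolEquivFin2.1 he.symm)
  rw [Finset.sum_congr rfl (fun y _ => by rw [key y])]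
  simp

lemma layerAct_leftinv {N : ℕ} (U : Fin N → Matrix (Fin 2) (Fin 2) ℂ)
    (hU : ∀ j, U j ∈ Matrix.unitaryGroup (Fin 2) ℂ) (ψ : QState N) :
    layerAct (fun j => star (U j)) (layerAct U ψ) = ψ := by
  rw [layerAct_comp]
  have : (fun j => star (U j) * U j) = (fun _ : Fin N => (1 : Matrix (Fin 2) (Fin 2) ℂ)) := by
    funext j; exact (hU j).1
  rw [this, layerAct_one]

lemma layerAct_inj {N : ℕ} (U : Fin N → Matrix (Fin 2) (Fin 2) ℂ)
    (hU : ∀ j, U j ∈ Matrix.unitaryGroup (Fin 2) ℂ) {ψ φ : QState N}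
    (h : layerAct U ψ = layerAct U φ) : ψ = φ := by
  rw [← layerAct_leftinv U hU ψ, ← layerAct_leftinv U hU φ, h]

lemma layerAct_zero {N : ℕ} (U : Fin N → Matrix (Fin 2) (Fin 2) ℂ) :
    layerAct U (fun _ => 0) = fun _ => 0 := by
  funext x; simp [layerAct]

lemma layerAct_eq_zero {N : ℕ} (U : Fin N → Matrix (Fin 2) (Fin 2) ℂ)
    (hU : ∀ j, U j ∈ Matrix.unitaryGroup (Fin 2) ℂ) {ψ : QState N}
    (h : ∀ y, layerAct U ψ y = 0) : ∀ y, ψ y = 0 := by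
  have : layerAct U ψ = layerAct U (fun _ => 0) := by
    rw [layerAct_zero]; funext y; exact h y
  have := layerAct_inj U hU this
  intro y; rw [this]

lemma layerAct_smul {N : ℕ} (U : Fin N → Matrix (Fin 2) (Fin 2) ℂ) (c : ℂ) (ψ : QState N) :
    ∀ y, layerAct U (fun z => c * ψ z) y = c * layerAct U ψ y := by
  intro y; simp only [layerAct, Finset.mul_sum]; refine Finset.sum_congr rfl fun z _ => by ring

lemma layerAct_comb {N : ℕ} (U : Fin N → Matrix (Fin 2) (Fin 2) ℂ) (c d : ℂ) (ψ φ : QState N) :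
    ∀ y, layerAct U (fun z => c * ψ z + d * φ z) y
      = c * layerAct U ψ y + d * layerAct U φ y := by
  intro y
  simp only [layerAct, Finset.mul_sum, ← Finset.sum_add_distrib]
  refine Finset.sum_congr rfl fun z _ => by ring
-- Part II: splitting machinery

section Split
variable {n m : ℕ}

/-- prepend a target bit to a bit string of the non-target qubits -/
def cns (t : Bool) (r : Fin (n + m) → Bool) : Fin (1 + n + m) → Bool :=
  fun i => if h : i.1 = 0 then t else r ⟨i.1 - 1, by have := i.2; omega⟩

/-- project a non-target qubit index down -/
def pr (i : Fin (1 + n + m)) (h : i ≠ tgt n m) : Fin (n + m) :=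
  ⟨i.1 - 1, by
    have h2 := i.2
    have h0 : i.1 ≠ 0 := fun hc => h (Fin.ext hc)
    omega⟩

@[simp] lemma cns_tgt (t : Bool) (r : Fin (n + m) → Bool) : cns t r (tgt n m) = t := rfl

@[simp] lemma cns_nontgt (t : Bool) (r : Fin (n + m) → Bool) (j : Fin (n + m)) :
    cns t r (nontgt n m j) = r j := by
  simp only [cns, nontgt]
  refine (dif_neg (by omega : ¬ (1 + (j:ℕ) = 0))).trans ?_
  congr 1
  apply Fin.ext
  simp

lemma nontgt_ne_tgt (j : Fin (n + m)) : nontgt n m j ≠ tgt n m := by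
  simp [nontgt, tgt, Fin.ext_iff]

lemma pr_nontgt (j : Fin (n + m)) : pr (nontgt n m j) (nontgt_ne_tgt j) = j := by
  simp only [pr, nontgt]; ext; simp

lemma cns_ne_tgt (t : Bool) (r : Fin (n + m) → Bool) {i : Fin (1 + n + m)} (h : i ≠ tgt n m) :
    cns t r i = r (pr i h) := by
  have h0 : i.1 ≠ 0 := by
    intro hc; apply h; apply Fin.ext; exact hc
  simp only [cns, pr]
  rw [dif_neg h0]

lemma nontgt_pr {i : Fin (1 + n + m)} (h : i ≠ tgt n m) : nontgt n m (pr i h) = i := by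
  have h0 : i.1 ≠ 0 := fun hc => h (Fin.ext hc)
  simp only [nontgt, pr]; apply Fin.ext; simp; omega

lemma cns_eta (y : Fin (1 + n + m) → Bool) : cns (y (tgt n m)) (fun j => y (nontgt n m j)) = y := by
  funext i
  by_cases h : i = tgt n m
  · subst h; rfl
  · rw [cns_ne_tgt _ _ h, nontgt_pr h]

/-- the equivalence between `Fin (1+n+m)` and `Option (Fin (n+m))` -/
def optEquiv : Option (Fin (n + m)) ≃ Fin (1 + n + m) where
  toFun o := o.elim (tgt n m) (nontgt n m)
  invFun i := if h : i = tgt n m then none else some (pr i h)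
  left_inv o := by
    cases o with
    | none => simp
    | some j =>
      simp only [Option.elim]
      refine (dif_neg (nontgt_ne_tgt j)).trans ?_
      rw [pr_nontgt]
  right_inv i := by
    by_cases h : i = tgt n m
    · subst h; simp
    · simp only [dif_neg h, Option.elim]; exact nontgt_pr h

lemma prod_split (F : Fin (1 + n + m) → ℂ) :
    ∏ j, F j = F (tgt n m) * ∏ j, F (nontgt n m j) := by
  rw [← (Fintype.prod_equiv optEquiv (fun o => F (optEquiv o)) F (fun o => rfl))]
  rw [Fintype.prod_option]
  rfl

/-- the equivalence between bit strings and (target bit, rest) -/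
def bsEquiv : (Fin (1 + n + m) → Bool) ≃ Bool × (Fin (n + m) → Bool) where
  toFun y := (y (tgt n m), fun j => y (nontgt n m j))
  invFun p := cns p.1 p.2
  left_inv y := cns_eta y
  right_inv p := by
    refine Prod.ext (by simp) ?_
    funext j; simp

lemma sum_split (G : (Fin (1 + n + m) → Bool) → ℂ) :
    ∑ y, G y = ∑ t : Bool, ∑ r : Fin (n + m) → Bool, G (cns t r) := by
  rw [← Equiv.sum_comp (bsEquiv).symm G, Fintype.sum_prod_type]
  rfl

/-- slicing a single-qubit layer action at the target qubit -/
lemma layer_slice (U : Fin (1 + n + m) → Matrix (Fin 2) (Fin 2) ℂ) (ψ : QState (1 + n + m))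
    (t : Bool) (r : Fin (n + m) → Bool) :
    layerAct U ψ (cns t r) =
      ∑ s : Bool, U (tgt n m) (bitIdx t) (bitIdx s) *
        layerAct (fun j => U (nontgt n m j)) (fun r' => ψ (cns s r')) r := by
  simp only [layerAct]
  rw [sum_split (fun y => (∏ j, U j (bitIdx (cns t r j)) (bitIdx (y j))) * ψ y)]
  refine Finset.sum_congr rfl (fun s _ => ?_)
  rw [Finset.mul_sum]
  refine Finset.sum_congr rfl (fun r' _ => ?_)
  rw [prod_split (fun j => U j (bitIdx (cns t r j)) (bitIdx (cns s r' j)))]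
  simp only [cns_tgt, cns_nontgt]
  ring

end Split
-- Part III: structure of a CZ layer relative to the target qubit
section CZSplit
variable {n m : ℕ}

/-- the sign function of an optional control set -/
noncomputable def dOf (O : Option (Finset (Fin (n + m)))) (r : Fin (n + m) → Bool) : ℂ :=
  match O with
  | none => 1
  | some T => if ∀ j ∈ T, r j = true then -1 else 1

lemma dOf_pm (O : Option (Finset (Fin (n + m)))) (r : Fin (n + m) → Bool) :
    dOf O r = 1 ∨ dOf O r = -1 := by
  cases O with
  | none => left; rfl
  | some T =>
    by_cases h : ∀ j ∈ T, r j = true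
    · right; simp only [dOf]; rw [if_pos h]
    · left; simp only [dOf]; rw [if_neg h]

lemma dOf_ne_zero (O : Option (Finset (Fin (n + m)))) (r : Fin (n + m) → Bool) :
    dOf O r ≠ 0 := by
  rcases dOf_pm O r with h | h <;> rw [h] <;> norm_num

lemma czSign_filter {N : ℕ} (p : Finset (Fin N) → Bool) (gs : List (Finset (Fin N)))
    (y : Fin N → Bool) :
    czSign gs y = czSign (gs.filter p) y * czSign (gs.filter (fun S => ! p S)) y := by
  induction gs with
  | nil => simp [czSign]
  | cons S t ih =>
    by_cases h : p S
    · rw [List.filter_cons_of_pos (by simp [h]), List.filter_cons_of_neg (by simp [h])]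
      simp only [czSign, List.map_cons, List.prod_cons] at ih ⊢
      rw [ih]; ring
    · rw [List.filter_cons_of_neg (by simp [h]), List.filter_cons_of_pos (by simp [h])]
      simp only [czSign, List.map_cons, List.prod_cons] at ih ⊢
      rw [ih]; ring

lemma czSign_no_tgt (gs : List (Finset (Fin (1 + n + m))))
    (hgs : ∀ S ∈ gs, tgt n m ∉ S) (t : Bool) (r : Fin (n + m) → Bool) :
    czSign gs (cns t r) = czSign gs (cns false r) := by
  induction gs with
  | nil => rfl
  | cons S l ih =>
    simp only [czSign, List.map_cons, List.prod_cons]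
    have h1 : (∀ i ∈ S, cns t r i = true) ↔ (∀ i ∈ S, cns false r i = true) := by
      constructor <;> intro h i hi <;>
      · have hne : i ≠ tgt n m := fun hc => hgs S (by simp) (hc ▸ hi)
        rw [cns_ne_tgt _ _ hne]
        have := h i hi
        rwa [cns_ne_tgt _ _ hne] at this
    have h2 := ih (fun S hS => hgs S (List.mem_cons_of_mem _ hS))
    simp only [czSign] at h2
    rw [h2]
    congr 1
    simp only [h1]

lemma filter_tgt_short (gs : List (Finset (Fin (1 + n + m))))
    (hgs : gs.Pairwise (fun S T => Disjoint S T)) :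
    (gs.filter (fun S => decide (tgt n m ∈ S))) = [] ∨
      ∃ S0, tgt n m ∈ S0 ∧ (gs.filter (fun S => decide (tgt n m ∈ S))) = [S0] := by
  induction gs with
  | nil => left; rfl
  | cons S t ih =>
    rcases List.pairwise_cons.1 hgs with ⟨hd, hp⟩
    by_cases h : tgt n m ∈ S
    · right
      refine ⟨S, h, ?_⟩
      rw [List.filter_cons_of_pos (by simp [h])]
      congr 1
      rw [List.filter_eq_nil_iff]
      intro T hT hTt
      have := hd T hT
      exact Finset.disjoint_left.1 this h (by simpa using hTt)
    · rw [List.filter_cons_of_neg (by simp [h])]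
      exact ih hp

/-- the control set of a gate, viewed on the non-target qubits -/
noncomputable def pim (S : Finset (Fin (1 + n + m))) : Finset (Fin (n + m)) :=
  (S.erase (tgt n m)).attach.image (fun i => pr i.1 (Finset.ne_of_mem_erase i.2))

lemma mem_pim {S : Finset (Fin (1 + n + m))} {j : Fin (n + m)} :
    j ∈ pim S ↔ nontgt n m j ∈ S := by
  constructor
  · rintro hj
    simp only [pim, Finset.mem_image, Finset.mem_attach, true_and] at hj
    obtain ⟨⟨i, hi⟩, hij⟩ := hj
    have : nontgt n m j = i := by rw [← hij]; exact nontgt_pr _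
    rw [this]
    exact Finset.mem_of_mem_erase hi
  · intro hj
    simp only [pim, Finset.mem_image, Finset.mem_attach, true_and]
    refine ⟨⟨nontgt n m j, Finset.mem_erase.2 ⟨nontgt_ne_tgt j, hj⟩⟩, ?_⟩
    exact pr_nontgt j

lemma czsplit (gs : List (Finset (Fin (1 + n + m))))
    (hgs : gs.Pairwise (fun S T => Disjoint S T)) :
    ∃ (e : (Fin (n + m) → Bool) → ℂ) (O : Option (Finset (Fin (n + m)))),
      (∀ r, e r = 1 ∨ e r = -1) ∧
      (∀ t r, czSign gs (cns t r) = e r * (if t then dOf O r else 1)) ∧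
      (∀ T, O = some T → T.Nonempty → ∃ S ∈ gs, tgt n m ∈ S ∧ 2 ≤ S.card) := by
  classical
  set p : Finset (Fin (1 + n + m)) → Bool := fun S => decide (tgt n m ∈ S) with hp
  have hfil : ∀ t r, czSign gs (cns t r) =
      czSign (gs.filter p) (cns t r) * czSign (gs.filter (fun S => ! p S)) (cns t r) :=
    fun t r => czSign_filter p gs (cns t r)
  have hrest : ∀ t r, czSign (gs.filter (fun S => ! p S)) (cns t r) =
      czSign (gs.filter (fun S => ! p S)) (cns false r) := by
    intro t r
    apply czSign_no_tgt
    intro S hS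
    have := List.of_mem_filter hS
    simpa [hp] using this
  set e : (Fin (n + m) → Bool) → ℂ :=
    fun r => czSign (gs.filter (fun S => ! p S)) (cns false r) with he
  rcases filter_tgt_short gs hgs with hnil | ⟨S0, hS0t, hone⟩
  · refine ⟨e, none, fun r => czSign_pm _ _, ?_, by simp⟩
    intro t r
    rw [hfil, hrest, hnil]
    have : czSign ([] : List (Finset (Fin (1 + n + m)))) (cns t r) = 1 := rfl
    rw [this]
    simp [dOf, he]
  · refine ⟨e, some (pim S0), fun r => czSign_pm _ _, ?_, ?_⟩
    · intro t r
      rw [hfil, hrest, hone]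
      have hsing : czSign [S0] (cns t r) = if ∀ i ∈ S0, cns t r i = true then -1 else 1 := by
        simp [czSign]
      rw [hsing]
      have hiff : (∀ i ∈ S0, cns t r i = true) ↔ (t = true ∧ ∀ j ∈ pim S0, r j = true) := by
        constructor
        · intro h
          refine ⟨h _ hS0t, fun j hj => ?_⟩
          have := h _ (mem_pim.1 hj)
          rwa [cns_nontgt] at this
        · rintro ⟨ht, h⟩ i hi
          by_cases hit : i = tgt n m
          · rw [hit, cns_tgt, ht]
          · rw [cns_ne_tgt _ _ hit]
            apply h
            rw [mem_pim, nontgt_pr hit]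
            exact hi
      rcases Bool.dichotomy t with ht | ht
      · subst ht
        have : ¬ (∀ i ∈ S0, cns false r i = true) := by
          intro h
          have := hiff.1 h
          simp at this
        rw [if_neg this]
        simp [dOf, he]
      · subst ht
        simp only [if_true, dOf]
        by_cases h : ∀ j ∈ pim S0, r j = true
        · rw [if_pos (hiff.2 ⟨rfl, h⟩), if_pos h]; ring
        · rw [if_neg (fun hc => h (hiff.1 hc).2), if_neg h]; ring
    · intro T hT hTne
      have hTeq : T = pim S0 := by injection hT.symm
      subst hTeq
      have hmem : S0 ∈ gs := by
        have : S0 ∈ gs.filter p := by rw [hone]; simp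
        exact List.mem_of_mem_filter this
      refine ⟨S0, hmem, hS0t, ?_⟩
      obtain ⟨j, hj⟩ := hTne
      have h1 : nontgt n m j ∈ S0 := mem_pim.1 hj
      have : 1 < S0.card := by
        apply Finset.one_lt_card.2
        exact ⟨tgt n m, hS0t, nontgt n m j, h1, (nontgt_ne_tgt j).symm⟩
      omega
end CZSplit
-- Part IV-A: splitting the non-target register into inputs and ancillas
section InpAnc
variable {n m : ℕ}

lemma prod_split2 (F : Fin (n + m) → ℂ) :
    ∏ j, F j = (∏ i : Fin n, F (Fin.castAdd m i)) * ∏ k : Fin m, F (Fin.natAdd n k) := by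
  rw [← Fintype.prod_equiv finSumFinEquiv (fun o => F (finSumFinEquiv o)) F (fun o => rfl)]
  rw [Fintype.prod_sum_type]
  rfl

/-- combine input bits and ancilla bits -/
def cmb (u : Fin n → Bool) (v : Fin m → Bool) : Fin (n + m) → Bool :=
  fun j => if h : j.1 < n then u ⟨j.1, h⟩ else v ⟨j.1 - n, by have := j.2; omega⟩

@[simp] lemma cmb_castAdd (u : Fin n → Bool) (v : Fin m → Bool) (i : Fin n) :
    cmb u v (Fin.castAdd m i) = u i := by
  simp only [cmb, Fin.castAdd]
  rw [dif_pos]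
  · congr 1
  · exact i.2

@[simp] lemma cmb_natAdd (u : Fin n → Bool) (v : Fin m → Bool) (k : Fin m) :
    cmb u v (Fin.natAdd n k) = v k := by
  simp only [cmb, Fin.natAdd]
  rw [dif_neg (by omega)]
  congr 1
  apply Fin.ext
  simp

lemma cmb_eta (r : Fin (n + m) → Bool) :
    cmb (fun i => r (Fin.castAdd m i)) (fun k => r (Fin.natAdd n k)) = r := by
  funext j
  by_cases h : j.1 < n
  · have : j = Fin.castAdd m ⟨j.1, h⟩ := by apply Fin.ext; rfl
    rw [this, cmb_castAdd]
  · have : j = Fin.natAdd n ⟨j.1 - n, by have := j.2; omega⟩ := by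
      apply Fin.ext; simp; omega
    rw [this, cmb_natAdd]

/-- the equivalence between non-target bit strings and (input bits, ancilla bits) -/
def iaEquiv : (Fin (n + m) → Bool) ≃ (Fin n → Bool) × (Fin m → Bool) where
  toFun r := (fun i => r (Fin.castAdd m i), fun k => r (Fin.natAdd n k))
  invFun p := cmb p.1 p.2
  left_inv r := cmb_eta r
  right_inv p := by
    refine Prod.ext ?_ ?_ <;> funext j <;> simp

lemma sum_split2 (G : (Fin (n + m) → Bool) → ℂ) :
    ∑ r, G r = ∑ u : Fin n → Bool, ∑ v : Fin m → Bool, G (cmb u v) := by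
  rw [← Equiv.sum_comp (iaEquiv).symm G, Fintype.sum_prod_type]
  rfl

/-- the input-plus-ancilla state on the non-target register -/
noncomputable def restState (x : Fin n → Bool) (α : QState m) : QState (n + m) :=
  fun r => (if ∀ i, r (Fin.castAdd m i) = x i then (1 : ℂ) else 0) *
    α (fun k => r (Fin.natAdd n k))

lemma restState_ne_zero (x : Fin n → Bool) (α : QState m) (hα : ∃ v, α v ≠ 0) :
    ∃ r, restState x α r ≠ 0 := by
  obtain ⟨v, hv⟩ := hα
  refine ⟨cmb x v, ?_⟩
  have h1 : ∀ i, cmb x v (Fin.castAdd m i) = x i := fun i => by simp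
  have h2 : (fun k => cmb x v (Fin.natAdd n k)) = v := by funext k; simp
  simp only [restState, if_pos h1, h2, one_mul]
  exact hv

lemma unit_ne_zero {k : ℕ} (ψ : QState k) (h : UnitVec ψ) : ∃ v, ψ v ≠ 0 := by
  by_contra hc
  push_neg at hc
  rw [UnitVec] at h
  have : ∑ x : Fin k → Bool, ‖ψ x‖ ^ 2 = 0 := by
    apply Finset.sum_eq_zero
    intro x _
    rw [hc x]
    simp
  rw [this] at h
  norm_num at h

/-- the product structure of a single-qubit layer applied to the rest state -/
lemma w_prod (V : Fin (n + m) → Matrix (Fin 2) (Fin 2) ℂ) (x : Fin n → Bool) (α : QState m)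
    (r : Fin (n + m) → Bool) :
    layerAct V (restState x α) r =
      (∏ i, V (Fin.castAdd m i) (bitIdx (r (Fin.castAdd m i))) (bitIdx (x i))) *
        layerAct (fun k => V (Fin.natAdd n k)) α (fun k => r (Fin.natAdd n k)) := by
  simp only [layerAct]
  rw [sum_split2 (fun z => (∏ j, V j (bitIdx (r j)) (bitIdx (z j))) * restState x α z)]
  have key : ∀ u : Fin n → Bool,
      (∑ v : Fin m → Bool,
        (∏ j, V j (bitIdx (r j)) (bitIdx (cmb u v j))) * restState x α (cmb u v)) =
      if u = x then
        (∏ i, V (Fin.castAdd m i) (bitIdx (r (Fin.castAdd m i))) (bitIdx (x i))) *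
          ∑ v : Fin m → Bool,
            (∏ k, V (Fin.natAdd n k) (bitIdx (r (Fin.natAdd n k))) (bitIdx (v k))) * α v
      else 0 := by
    intro u
    by_cases hu : u = x
    · subst hu
      rw [if_pos rfl, Finset.mul_sum]
      refine Finset.sum_congr rfl (fun v _ => ?_)
      have hcond : ∀ i, cmb u v (Fin.castAdd m i) = u i := fun i => by simp
      have h2 : (fun k => cmb u v (Fin.natAdd n k)) = v := by funext k; simp
      simp only [restState, if_pos hcond, h2, one_mul]
      rw [prod_split2 (fun j => V j (bitIdx (r j)) (bitIdx (cmb u v j)))]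
      simp only [cmb_castAdd, cmb_natAdd]
      ring
    · rw [if_neg hu]
      apply Finset.sum_eq_zero
      intro v _
      have hcond : ¬ (∀ i, cmb u v (Fin.castAdd m i) = x i) := by
        intro hc
        apply hu
        funext i
        have := hc i
        rwa [cmb_castAdd] at this
      simp only [restState, if_neg hcond, zero_mul, mul_zero]
  rw [Finset.sum_congr rfl (fun u _ => key u)]
  rw [Finset.sum_ite_eq' Finset.univ x]
  simp only [Finset.mem_univ, if_pos]
end InpAnc
-- Part V: parity lemmas and 2x2 unitary helpers
section Helpers

lemma ite_update {n : ℕ} (x : Fin n → Bool) (i : Fin n) (c : Bool) :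
    (fun j => if (Function.update x i c) j then (1 : ℕ) else 0) =
      Function.update (fun j => if x j then (1 : ℕ) else 0) i (if c then 1 else 0) := by
  funext j
  by_cases h : j = i
  · subst h; simp
  · simp [Function.update_of_ne h]

lemma parity_sum_split {n : ℕ} (x : Fin n → Bool) (i : Fin n) (c : Bool) :
    (∑ j, if (Function.update x i c) j then (1 : ℕ) else 0) =
      (if c then 1 else 0) + ∑ j ∈ Finset.univ.erase i, (if x j then (1 : ℕ) else 0) := by
  rw [ite_update]
  rw [← Finset.add_sum_erase _ _ (Finset.mem_univ i)]
  congr 1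
  · simp
  · apply Finset.sum_congr rfl
    intro j hj
    rw [Function.update_of_ne (Finset.ne_of_mem_erase hj)]

lemma parityB_flip {n : ℕ} (x : Fin n → Bool) (i : Fin n) :
    parityB (Function.update x i (!x i)) = ! parityB x := by
  have h1 := parity_sum_split x i (!x i)
  have h2 := parity_sum_split x i (x i)
  have h3 : Function.update x i (x i) = x := Function.update_eq_self i x
  rw [h3] at h2
  simp only [parityB]
  rw [h1]
  set s := ∑ j ∈ Finset.univ.erase i, (if x j then (1 : ℕ) else 0) with hs
  rw [show (∑ j, if x j then (1:ℕ) else 0) = (if x i then 1 else 0) + s from h2]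
  rw [← decide_not]
  apply decide_eq_decide.2
  cases hx : x i <;> simp <;> omega

lemma exists_parityB {n : ℕ} (hn : 0 < n) (ε : Bool) : ∃ x : Fin n → Bool, parityB x = ε := by
  have h0 : parityB (fun _ : Fin n => false) = false := by
    simp [parityB]
  cases ε
  · exact ⟨_, h0⟩
  · refine ⟨Function.update (fun _ : Fin n => false) ⟨0, hn⟩ true, ?_⟩
    have := parityB_flip (fun _ : Fin n => false) ⟨0, hn⟩
    simp only [Bool.not_false] at this
    rw [this, h0]
    rfl

variable {U : Matrix (Fin 2) (Fin 2) ℂ}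

lemma unit_col (hU : U ∈ Matrix.unitaryGroup (Fin 2) ℂ) (i j : Fin 2) :
    star (U 0 i) * U 0 j + star (U 1 i) * U 1 j = if i = j then 1 else 0 := by
  have h := hU.1
  have := Matrix.ext_iff.2 h i j
  rw [Matrix.mul_apply, Fin.sum_univ_two] at this
  simp only [Matrix.star_apply] at this
  rw [this]
  rw [Matrix.one_apply]

lemma unit_row (hU : U ∈ Matrix.unitaryGroup (Fin 2) ℂ) (i j : Fin 2) :
    U i 0 * star (U j 0) + U i 1 * star (U j 1) = if i = j then 1 else 0 := by
  have h := hU.2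
  have := Matrix.ext_iff.2 h i j
  rw [Matrix.mul_apply, Fin.sum_univ_two] at this
  simp only [Matrix.star_apply] at this
  rw [this]
  rw [Matrix.one_apply]

lemma col_ne_zero (hU : U ∈ Matrix.unitaryGroup (Fin 2) ℂ) (j : Fin 2) :
    ¬ (U 0 j = 0 ∧ U 1 j = 0) := by
  rintro ⟨h0, h1⟩
  have := unit_col hU j j
  rw [h0, h1] at this
  simp at this

lemma row_ne_zero (hU : U ∈ Matrix.unitaryGroup (Fin 2) ℂ) (i : Fin 2) :
    ¬ (U i 0 = 0 ∧ U i 1 = 0) := by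
  rintro ⟨h0, h1⟩
  have := unit_row hU i i
  rw [h0, h1] at this
  simp at this

/-- zero pattern of a semiclassical unitary -/
lemma semiclassical_cases (hU : U ∈ Matrix.unitaryGroup (Fin 2) ℂ)
    (hs : ∃ p q : Fin 2 × Fin 2, p ≠ q ∧ U p.1 p.2 = 0 ∧ U q.1 q.2 = 0) :
    (U 0 0 = 0 ∧ U 1 1 = 0) ∨ (U 0 1 = 0 ∧ U 1 0 = 0) := by
  obtain ⟨⟨pi, pj⟩, ⟨qi, qj⟩, hpq, h1, h2⟩ := hs
  fin_cases pi <;> fin_cases pj <;> fin_cases qi <;> fin_cases qj <;>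
    first
      | exact absurd rfl hpq
      | (left; exact ⟨h1, h2⟩)
      | (left; exact ⟨h2, h1⟩)
      | (right; exact ⟨h1, h2⟩)
      | (right; exact ⟨h2, h1⟩)
      | (exfalso; exact row_ne_zero hU 0 ⟨h1, h2⟩)
      | (exfalso; exact row_ne_zero hU 0 ⟨h2, h1⟩)
      | (exfalso; exact row_ne_zero hU 1 ⟨h1, h2⟩)
      | (exfalso; exact row_ne_zero hU 1 ⟨h2, h1⟩)
      | (exfalso; exact col_ne_zero hU 0 ⟨h1, h2⟩)
      | (exfalso; exact col_ne_zero hU 0 ⟨h2, h1⟩)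
      | (exfalso; exact col_ne_zero hU 1 ⟨h1, h2⟩)
      | (exfalso; exact col_ne_zero hU 1 ⟨h2, h1⟩)

/-- a unitary kills only the zero vector -/
lemma unitary_mulvec_zero (hU : U ∈ Matrix.unitaryGroup (Fin 2) ℂ) {v : Fin 2 → ℂ}
    (h0 : U 0 0 * v 0 + U 0 1 * v 1 = 0) (h1 : U 1 0 * v 0 + U 1 1 * v 1 = 0) :
    v 0 = 0 ∧ v 1 = 0 := by
  have c00 := unit_col hU 0 0
  have c01 := unit_col hU 0 1
  have c10 := unit_col hU 1 0
  have c11 := unit_col hU 1 1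
  norm_num at c00 c01 c10 c11
  constructor
  · linear_combination (starRingEnd ℂ) (U 0 0) * h0 + (starRingEnd ℂ) (U 1 0) * h1
      - v 0 * c00 - v 1 * c01
  · linear_combination (starRingEnd ℂ) (U 0 1) * h0 + (starRingEnd ℂ) (U 1 1) * h1
      - v 0 * c10 - v 1 * c11

end Helpers
-- Part VI: the combinatorial core lemma
section Comb
variable {n m : ℕ}

lemma col_choice {U : Matrix (Fin 2) (Fin 2) ℂ} (hU : U ∈ Matrix.unitaryGroup (Fin 2) ℂ)
    (c : Bool) : ∃ β : Bool, U (bitIdx β) (bitIdx c) ≠ 0 := by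
  by_cases h : U (bitIdx false) (bitIdx c) = 0
  · refine ⟨true, fun h2 => ?_⟩
    cases c
    · exact col_ne_zero hU 0 ⟨h, h2⟩
    · exact col_ne_zero hU 1 ⟨h, h2⟩
  · exact ⟨false, h⟩

lemma castOrNat (j : Fin (n + m)) :
    (∃ i : Fin n, j = Fin.castAdd m i) ∨ (∃ k : Fin m, j = Fin.natAdd n k) := by
  by_cases h : j.1 < n
  · exact Or.inl ⟨⟨j.1, h⟩, Fin.ext rfl⟩
  · refine Or.inr ⟨⟨j.1 - n, by have := j.2; omega⟩, Fin.ext ?_⟩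
    simp only [Fin.natAdd]
    omega

lemma comb (hn : 2 ≤ n) (V : Fin (n + m) → Matrix (Fin 2) (Fin 2) ℂ)
    (hV : ∀ j, V j ∈ Matrix.unitaryGroup (Fin 2) ℂ) (α : QState m) (hα : ∃ v, α v ≠ 0)
    (T0 : Finset (Fin (n + m))) (ε : Bool)
    (hIN : ∀ x : Fin n → Bool, parityB x = ε → ∀ r, layerAct V (restState x α) r ≠ 0 →
      ∀ j ∈ T0, r j = true)
    (hOUT : ∀ x : Fin n → Bool, parityB x = (!ε) → ∀ r, layerAct V (restState x α) r ≠ 0 →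
      ¬ ∀ j ∈ T0, r j = true) : False := by
  classical
  set γ : QState m := layerAct (fun k => V (Fin.natAdd n k)) α with hγdef
  have hγ : ∃ v, γ v ≠ 0 := by
    by_contra hc
    push_neg at hc
    have := layerAct_eq_zero (fun k => V (Fin.natAdd n k)) (fun k => hV _) hc
    obtain ⟨v, hv⟩ := hα
    exact hv (this v)
  obtain ⟨va, hva⟩ := hγ
  -- evaluation of the layer on a combined bit string
  have heval : ∀ (x : Fin n → Bool) (β : Fin n → Bool) (v : Fin m → Bool),
      layerAct V (restState x α) (cmb β v) =
        (∏ i, V (Fin.castAdd m i) (bitIdx (β i)) (bitIdx (x i))) * γ v := by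
    intro x β v
    rw [w_prod]
    have h1 : (fun k => cmb β v (Fin.natAdd n k)) = v := by funext k; simp
    rw [h1]
    congr 1
    refine Finset.prod_congr rfl (fun i _ => ?_)
    rw [cmb_castAdd]
  -- fact 1 : controlled input qubits must have semiclassical first layer
  have fact1 : ∀ x : Fin n → Bool, parityB x = ε → ∀ i : Fin n, Fin.castAdd m i ∈ T0 →
      V (Fin.castAdd m i) (bitIdx false) (bitIdx (x i)) = 0 := by
    intro x hx i hiT
    by_contra hnz
    set β : Fin n → Bool := fun i' =>
      if i' = i then false else Classical.choose (col_choice (hV (Fin.castAdd m i')) (x i'))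
      with hβ
    have hprod : (∏ i', V (Fin.castAdd m i') (bitIdx (β i')) (bitIdx (x i'))) ≠ 0 := by
      rw [Finset.prod_ne_zero_iff]
      intro i' _
      by_cases h : i' = i
      · subst h; simp only [hβ, if_pos rfl]; exact hnz
      · simp only [hβ, if_neg h]
        exact Classical.choose_spec (col_choice (hV (Fin.castAdd m i')) (x i'))
    have hne : layerAct V (restState x α) (cmb β va) ≠ 0 := by
      rw [heval]
      exact mul_ne_zero hprod hva
    have := hIN x hx (cmb β va) hne (Fin.castAdd m i) hiT
    rw [cmb_castAdd] at this
    simp only [hβ, if_pos rfl] at this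
    cases this
  obtain ⟨x0, hx0⟩ := exists_parityB (by omega : 0 < n) ε
  -- fact 2 : controlled ancilla qubits are forced on the support of γ
  have fact2 : ∀ v : Fin m → Bool, γ v ≠ 0 → ∀ k : Fin m, Fin.natAdd n k ∈ T0 →
      v k = true := by
    intro v hv k hkT
    set β : Fin n → Bool := fun i =>
      if Fin.castAdd m i ∈ T0 then true
      else Classical.choose (col_choice (hV (Fin.castAdd m i)) (x0 i)) with hβ
    have hprod : (∏ i, V (Fin.castAdd m i) (bitIdx (β i)) (bitIdx (x0 i))) ≠ 0 := by
      rw [Finset.prod_ne_zero_iff]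
      intro i _
      by_cases h : Fin.castAdd m i ∈ T0
      · simp only [hβ, if_pos h]
        intro hz
        have h0 := fact1 x0 hx0 i h
        exact col_ne_zero (hV (Fin.castAdd m i)) (bitIdx (x0 i)) ⟨h0, hz⟩
      · simp only [hβ, if_neg h]
        exact Classical.choose_spec (col_choice (hV (Fin.castAdd m i)) (x0 i))
    have hne : layerAct V (restState x0 α) (cmb β v) ≠ 0 := by
      rw [heval]; exact mul_ne_zero hprod hv
    have := hIN x0 hx0 (cmb β v) hne (Fin.natAdd n k) hkT
    rwa [cmb_natAdd] at this
  -- now split according to whether some input qubit avoids T0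
  by_cases hcase : ∃ i : Fin n, Fin.castAdd m i ∉ T0
  · -- flip that input bit
    obtain ⟨istar, histar⟩ := hcase
    set x1 : Fin n → Bool := Function.update x0 istar (!x0 istar) with hx1def
    have hx1 : parityB x1 = !ε := by rw [hx1def, parityB_flip, hx0]
    set β : Fin n → Bool := fun i =>
      if Fin.castAdd m i ∈ T0 then true
      else Classical.choose (col_choice (hV (Fin.castAdd m i)) (x1 i)) with hβ
    have hprod : (∏ i, V (Fin.castAdd m i) (bitIdx (β i)) (bitIdx (x1 i))) ≠ 0 := by
      rw [Finset.prod_ne_zero_iff]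
      intro i _
      by_cases h : Fin.castAdd m i ∈ T0
      · simp only [hβ, if_pos h]
        have hii : i ≠ istar := fun hc => histar (hc ▸ h)
        have hx1i : x1 i = x0 i := Function.update_of_ne hii _ _
        rw [hx1i]
        intro hz
        exact col_ne_zero (hV (Fin.castAdd m i)) (bitIdx (x0 i)) ⟨fact1 x0 hx0 i h, hz⟩
      · simp only [hβ, if_neg h]
        exact Classical.choose_spec (col_choice (hV (Fin.castAdd m i)) (x1 i))
    have hne : layerAct V (restState x1 α) (cmb β va) ≠ 0 := by
      rw [heval]; exact mul_ne_zero hprod hva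
    apply hOUT x1 hx1 (cmb β va) hne
    intro j hjT
    rcases castOrNat j with ⟨i, rfl⟩ | ⟨k, rfl⟩
    · rw [cmb_castAdd]
      simp only [hβ, if_pos hjT]
    · rw [cmb_natAdd]
      exact fact2 va hva k hjT
  · -- all input qubits are controlled : flip two bits
    push_neg at hcase
    have h01 : (⟨0, by omega⟩ : Fin n) ≠ ⟨1, by omega⟩ := by
      simp [Fin.ext_iff]
    set i0 : Fin n := ⟨0, by omega⟩
    set i1 : Fin n := ⟨1, by omega⟩
    set x1 : Fin n → Bool := Function.update (Function.update x0 i0 (!x0 i0)) i1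
      (!(Function.update x0 i0 (!x0 i0)) i1) with hx1def
    have hx1 : parityB x1 = ε := by
      rw [hx1def, parityB_flip, parityB_flip, hx0, Bool.not_not]
    have hx1i0 : x1 i0 = !x0 i0 := by
      rw [hx1def, Function.update_of_ne h01, Function.update_self]
    have hz0 := fact1 x0 hx0 i0 (hcase i0)
    have hz1 := fact1 x1 hx1 i0 (hcase i0)
    rw [hx1i0] at hz1
    apply row_ne_zero (hV (Fin.castAdd m i0)) 0
    cases hb : x0 i0
    · rw [hb] at hz0 hz1
      exact ⟨hz0, hz1⟩
    · rw [hb] at hz0 hz1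
      exact ⟨hz1, hz0⟩
end Comb
-- Part VII: the endgame lemma
section Endgame
variable {n m : ℕ}

lemma endgame (hn : 2 ≤ n) (V : Fin (n + m) → Matrix (Fin 2) (Fin 2) ℂ)
    (hV : ∀ j, V j ∈ Matrix.unitaryGroup (Fin 2) ℂ) (α : QState m) (hα : ∃ v, α v ≠ 0)
    (O0 : Option (Finset (Fin (n + m)))) (κ μ : Bool → ℂ)
    (hcon : ∀ (x : Fin n → Bool) (r : Fin (n + m) → Bool),
      (κ (parityB x) + μ (parityB x) * dOf O0 r) * layerAct V (restState x α) r = 0)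
    (halg : ∀ σ : ℂ, (σ = 1 ∨ σ = -1) →
      ¬ (κ false = σ * μ false ∧ κ true = σ * μ true)) : False := by
  classical
  have hwne : ∀ x : Fin n → Bool, ∃ r, layerAct V (restState x α) r ≠ 0 := by
    intro x
    by_contra hc
    push_neg at hc
    have := layerAct_eq_zero V hV hc
    obtain ⟨r, hr⟩ := restState_ne_zero x α hα
    exact hr (this r)
  have hclass : ∀ ε : Bool, ∃ (x : Fin n → Bool) (r : Fin (n + m) → Bool),
      parityB x = ε ∧ layerAct V (restState x α) r ≠ 0 := by
    intro ε
    obtain ⟨x, hx⟩ := exists_parityB (by omega : 0 < n) ε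
    obtain ⟨r, hr⟩ := hwne x
    exact ⟨x, r, hx, hr⟩
  -- a supported point yields the linear relation for its parity class
  have hrel : ∀ (ε : Bool) (r : Fin (n + m) → Bool),
      (∃ x, parityB x = ε ∧ layerAct V (restState x α) r ≠ 0) →
      κ ε + μ ε * dOf O0 r = 0 := by
    rintro ε r ⟨x, hx, hr⟩
    have := hcon x r
    rw [hx] at this
    rcases mul_eq_zero.1 this with h | h
    · exact h
    · exact absurd h hr
  rcases O0 with _ | T
  · -- trivial sign : both classes satisfy κ = -μ
    apply halg (-1) (Or.inr rfl)
    constructor <;>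
    · obtain ⟨x, r, hx, hr⟩ := hclass _
      have := hrel _ r ⟨x, hx, hr⟩
      simp only [dOf] at this
      linear_combination this
  · -- nontrivial control set
    have key : ∀ ε : Bool, ∃ σ : ℂ, (σ = 1 ∨ σ = -1) ∧ κ ε = σ * μ ε := by
      intro ε
      obtain ⟨x, r, hx, hr⟩ := hclass ε
      have h := hrel ε r ⟨x, hx, hr⟩
      rcases dOf_pm (some T) r with hd | hd
      · rw [hd] at h
        exact ⟨-1, Or.inr rfl, by linear_combination h⟩
      · rw [hd] at h
        exact ⟨1, Or.inl rfl, by linear_combination h⟩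
    obtain ⟨σf, hσf1, hσf2⟩ := key false
    obtain ⟨σt, hσt1, hσt2⟩ := key true
    have hμf : μ false ≠ 0 := by
      intro h0
      apply halg σt hσt1
      refine ⟨?_, hσt2⟩
      rw [h0, hσf2, h0]
      ring
    have hμt : μ true ≠ 0 := by
      intro h0
      apply halg σf hσf1
      refine ⟨hσf2, ?_⟩
      rw [h0, hσt2, h0]
      ring
    have hσne : σf ≠ σt := by
      intro h
      exact halg σt hσt1 ⟨h ▸ hσf2, hσt2⟩
    -- the class with sign 1 is supported inside the all-ones set, the other outside
    have hforce : ∀ (ε : Bool) (σ : ℂ), κ ε = σ * μ ε → μ ε ≠ 0 →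
        ∀ x, parityB x = ε → ∀ r, layerAct V (restState x α) r ≠ 0 →
        dOf (some T) r = -σ := by
      intro ε σ hκ hμ x hx r hr
      have h := hrel ε r ⟨x, hx, hr⟩
      have h2 : μ ε * (σ + dOf (some T) r) = 0 := by
        rw [hκ] at h
        linear_combination h
      rcases mul_eq_zero.1 h2 with h3 | h3
      · exact absurd h3 hμ
      · linear_combination h3
    have hIN : ∀ (ε : Bool) (σ : ℂ), σ = 1 → κ ε = σ * μ ε → μ ε ≠ 0 →
        ∀ x, parityB x = ε → ∀ r, layerAct V (restState x α) r ≠ 0 →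
        ∀ j ∈ T, r j = true := by
      intro ε σ hσ hκ hμ x hx r hr
      have := hforce ε σ hκ hμ x hx r hr
      rw [hσ] at this
      simp only [dOf] at this
      by_contra hc
      push_neg at hc
      obtain ⟨j, hj, hrj⟩ := hc
      rw [if_neg (by
        intro hall
        exact (by simpa [hrj] using hall j hj : False))] at this
      norm_num at this
    have hOUT : ∀ (ε : Bool) (σ : ℂ), σ = -1 → κ ε = σ * μ ε → μ ε ≠ 0 →
        ∀ x, parityB x = ε → ∀ r, layerAct V (restState x α) r ≠ 0 →
        ¬ ∀ j ∈ T, r j = true := by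
      intro ε σ hσ hκ hμ x hx r hr hall
      have := hforce ε σ hκ hμ x hx r hr
      rw [hσ] at this
      simp only [dOf, if_pos hall] at this
      norm_num at this
    rcases hσf1 with rfl | rfl <;> rcases hσt1 with rfl | rfl
    · exact hσne rfl
    · -- false class IN, true class OUT
      exact comb hn V hV α hα T false
        (fun x hx => hIN false 1 rfl hσf2 hμf x hx)
        (fun x hx => hOUT true (-1) rfl hσt2 hμt x (by simpa using hx))
    · -- true class IN, false class OUT
      exact comb hn V hV α hα T true
        (fun x hx => hIN true 1 rfl hσt2 hμt x hx)
        (fun x hx => hOUT false (-1) rfl hσf2 hμf x (by simpa using hx))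
    · exact hσne rfl
end Endgame

-- Part VII-b: the two-row annihilation lemma for goal 1
lemma rows2zero {U : Matrix (Fin 2) (Fin 2) ℂ} (hU : U ∈ Matrix.unitaryGroup (Fin 2) ℂ)
    {G H : ℂ} (p0 : (starRingEnd ℂ) (U 0 1) * G - (starRingEnd ℂ) (U 0 0) * H = 0)
    (p1 : (starRingEnd ℂ) (U 1 1) * G - (starRingEnd ℂ) (U 1 0) * H = 0) :
    G = 0 ∧ H = 0 := by
  have h00 := unit_col hU 0 0
  have h01 := unit_col hU 0 1
  have h10 := unit_col hU 1 0
  have h11 := unit_col hU 1 1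
  norm_num at h00 h01 h10 h11
  constructor
  · linear_combination U 0 1 * p0 + U 1 1 * p1 - G * h11 + H * h01
  · linear_combination (-(U 0 0)) * p0 - U 1 0 * p1 + G * h10 - H * h00
-- Part VIII: the slice formula for the state before the final layer
section Slice4
variable {n m : ℕ}

@[simp] lemma bitIdx_false : bitIdx false = 0 := rfl
@[simp] lemma bitIdx_true : bitIdx true = 1 := rfl

lemma inState_slice (x : Fin n → Bool) (α : QState m) (s : Bool) (r' : Fin (n + m) → Bool) :
    inState n m false x α (cns s r') = (if s = false then 1 else 0) * restState x α r' := by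
  have hc : ∀ i : Fin n, cns s r' (inp n m i) = r' (Fin.castAdd m i) := by
    intro i
    have : inp n m i = nontgt n m (Fin.castAdd m i) := rfl
    rw [this, cns_nontgt]
  have hanc : ∀ k : Fin m, anc n m k = nontgt n m (Fin.natAdd n k) := by
    intro k
    apply Fin.ext
    simp [anc, nontgt, Fin.natAdd]
    omega
  simp only [inState, restState]
  rw [show (fun j => cns s r' (anc n m j)) = fun k => r' (Fin.natAdd n k) from
    funext fun k => by rw [hanc k, cns_nontgt]]
  by_cases hs : s = false <;> by_cases hP : ∀ i, r' (Fin.castAdd m i) = x i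
  · rw [if_pos ⟨hs, fun i => by rw [hc i]; exact hP i⟩, if_pos hs, if_pos hP]; ring
  · rw [if_neg (fun hcon => hP (fun i => by rw [← hc i]; exact hcon.2 i)),
      if_pos hs, if_neg hP]; ring
  · rw [if_neg (fun hcon => hs hcon.1), if_neg hs]; ring
  · rw [if_neg (fun hcon => hs hcon.1), if_neg hs]; ring

lemma st4_slice (L0 L1 : Fin (1 + n + m) → Matrix (Fin 2) (Fin 2) ℂ)
    (Z0 Z1 : List (Finset (Fin (1 + n + m))))
    (e0 e1 : (Fin (n + m) → Bool) → ℂ) (O0 O1 : Option (Finset (Fin (n + m))))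
    (he0 : ∀ t r, czSign Z0 (cns t r) = e0 r * (if t then dOf O0 r else 1))
    (he1 : ∀ t r, czSign Z1 (cns t r) = e1 r * (if t then dOf O1 r else 1))
    (x : Fin n → Bool) (α : QState m) (t : Bool) (r : Fin (n + m) → Bool) :
    czLayerAct Z1 (layerAct L1 (czLayerAct Z0 (layerAct L0 (inState n m false x α)))) (cns t r)
      = e1 r * (if t then dOf O1 r else 1) *
        (L1 (tgt n m) (bitIdx t) 0 * (L0 (tgt n m) 0 0 *
            layerAct (fun j => L1 (nontgt n m j)) (fun r' => e0 r' *
              layerAct (fun j => L0 (nontgt n m j)) (restState x α) r') r)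
         + L1 (tgt n m) (bitIdx t) 1 * (L0 (tgt n m) 1 0 *
            layerAct (fun j => L1 (nontgt n m j)) (fun r' => dOf O0 r' * e0 r' *
              layerAct (fun j => L0 (nontgt n m j)) (restState x α) r') r)) := by
  have hst1 : ∀ (t : Bool) (r : Fin (n + m) → Bool),
      layerAct L0 (inState n m false x α) (cns t r) =
        L0 (tgt n m) (bitIdx t) 0 *
          layerAct (fun j => L0 (nontgt n m j)) (restState x α) r := by
    intro t r
    rw [layer_slice, Fintype.sum_bool]
    rw [show (fun r' => inState n m false x α (cns true r')) =
        (fun r' => (0 : ℂ) * restState x α r') from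
      funext fun r' => by rw [inState_slice]; norm_num]
    rw [show (fun r' => inState n m false x α (cns false r')) =
        (fun r' => (1 : ℂ) * restState x α r') from
      funext fun r' => by rw [inState_slice]; norm_num]
    rw [layerAct_smul, layerAct_smul]
    simp
  have hst2 : ∀ (t : Bool) (r : Fin (n + m) → Bool),
      czLayerAct Z0 (layerAct L0 (inState n m false x α)) (cns t r) =
        e0 r * (if t then dOf O0 r else 1) * (L0 (tgt n m) (bitIdx t) 0 *
          layerAct (fun j => L0 (nontgt n m j)) (restState x α) r) := by
    intro t r
    rw [czLayerAct_eq_sign, he0, hst1]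
  have hst3 : ∀ (t : Bool) (r : Fin (n + m) → Bool),
      layerAct L1 (czLayerAct Z0 (layerAct L0 (inState n m false x α))) (cns t r) =
        L1 (tgt n m) (bitIdx t) 0 * (L0 (tgt n m) 0 0 *
            layerAct (fun j => L1 (nontgt n m j)) (fun r' => e0 r' *
              layerAct (fun j => L0 (nontgt n m j)) (restState x α) r') r)
         + L1 (tgt n m) (bitIdx t) 1 * (L0 (tgt n m) 1 0 *
            layerAct (fun j => L1 (nontgt n m j)) (fun r' => dOf O0 r' * e0 r' *
              layerAct (fun j => L0 (nontgt n m j)) (restState x α) r') r) := by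
    intro t r
    rw [layer_slice, Fintype.sum_bool]
    rw [show (fun r' => czLayerAct Z0 (layerAct L0 (inState n m false x α)) (cns true r')) =
        (fun r' => (L0 (tgt n m) 1 0) * (dOf O0 r' * e0 r' *
          layerAct (fun j => L0 (nontgt n m j)) (restState x α) r')) from
      funext fun r' => by rw [hst2]; simp; ring]
    rw [show (fun r' => czLayerAct Z0 (layerAct L0 (inState n m false x α)) (cns false r')) =
        (fun r' => (L0 (tgt n m) 0 0) * (e0 r' *
          layerAct (fun j => L0 (nontgt n m j)) (restState x α) r')) from
      funext fun r' => by rw [hst2]; simp; ring]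
    rw [layerAct_smul, layerAct_smul]
    simp only [bitIdx_false, bitIdx_true]
    ring
  rw [czLayerAct_eq_sign, he1, hst3]
end Slice4

-- Part IX: final helpers
lemma solve2 {k : ℕ} {U : Matrix (Fin 2) (Fin 2) ℂ} (hU : U ∈ Matrix.unitaryGroup (Fin 2) ℂ)
    (p : Bool) (X Y φ : QState k)
    (heq : ∀ (t : Bool) (r : Fin k → Bool),
      U (bitIdx t) 1 * Y r + U (bitIdx t) 0 * X r = (if t = p then 1 else 0) * φ r) :
    (∀ r, X r = (starRingEnd ℂ) (U (bitIdx p) 0) * φ r) ∧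
    (∀ r, Y r = (starRingEnd ℂ) (U (bitIdx p) 1) * φ r) := by
  have c00 := unit_col hU 0 0
  have c01 := unit_col hU 0 1
  have c10 := unit_col hU 1 0
  have c11 := unit_col hU 1 1
  norm_num at c00 c01 c10 c11
  cases p <;> constructor <;> intro r <;>
    [skip; skip; skip; skip] <;>
    (have e0 := heq false r; have e1 := heq true r;
     simp only [bitIdx_false, bitIdx_true] at e0 e1 ⊢; norm_num at e0 e1)
  · linear_combination (starRingEnd ℂ) (U 0 0) * e0 + (starRingEnd ℂ) (U 1 0) * e1 - X r * c00 - Y r * c01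
  · linear_combination (starRingEnd ℂ) (U 0 1) * e0 + (starRingEnd ℂ) (U 1 1) * e1 - Y r * c11 - X r * c10
  · linear_combination (starRingEnd ℂ) (U 0 0) * e0 + (starRingEnd ℂ) (U 1 0) * e1 - X r * c00 - Y r * c01
  · linear_combination (starRingEnd ℂ) (U 0 1) * e0 + (starRingEnd ℂ) (U 1 1) * e1 - Y r * c11 - X r * c10

lemma unitary_mulvec_zero' {U : Matrix (Fin 2) (Fin 2) ℂ}
    (hU : U ∈ Matrix.unitaryGroup (Fin 2) ℂ) {v0 v1 : ℂ}
    (h0 : U 0 0 * v0 + U 0 1 * v1 = 0) (h1 : U 1 0 * v0 + U 1 1 * v1 = 0) :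
    v0 = 0 ∧ v1 = 0 := by
  have c00 := unit_col hU 0 0
  have c01 := unit_col hU 0 1
  have c10 := unit_col hU 1 0
  have c11 := unit_col hU 1 1
  norm_num at c00 c01 c10 c11
  constructor
  · linear_combination (starRingEnd ℂ) (U 0 0) * h0 + (starRingEnd ℂ) (U 1 0) * h1 - v0 * c00 - v1 * c01
  · linear_combination (starRingEnd ℂ) (U 0 1) * h0 + (starRingEnd ℂ) (U 1 1) * h1 - v0 * c10 - v1 * c11

lemma combzero {k : ℕ} (R : Fin k → Matrix (Fin 2) (Fin 2) ℂ)
    (hR : ∀ j, R j ∈ Matrix.unitaryGroup (Fin 2) ℂ) (c d : ℂ) (ψ φ : QState k)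
    (h : ∀ r, c * layerAct R ψ r + d * layerAct R φ r = 0) :
    ∀ r, c * ψ r + d * φ r = 0 := by
  have h2 : ∀ r, layerAct R (fun z => c * ψ z + d * φ z) r = 0 := by
    intro r
    rw [layerAct_comb]
    exact h r
  exact layerAct_eq_zero R hR h2

lemma coreAB {n m : ℕ} (L0 L1 : Fin (1 + n + m) → Matrix (Fin 2) (Fin 2) ℂ)
    (hL1 : ∀ j : Fin (n + m), L1 (nontgt n m j) ∈ Matrix.unitaryGroup (Fin 2) ℂ)
    (e0 : (Fin (n + m) → Bool) → ℂ) (he0pm : ∀ r, e0 r = 1 ∨ e0 r = -1)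
    (O0 : Option (Finset (Fin (n + m)))) (α : QState m) (x : Fin n → Bool) (G H : ℂ)
    (hz : ∀ r, G * layerAct (fun j => L1 (nontgt n m j)) (fun r' => e0 r' *
          layerAct (fun j => L0 (nontgt n m j)) (restState x α) r') r
        + H * layerAct (fun j => L1 (nontgt n m j)) (fun r' => dOf O0 r' * e0 r' *
          layerAct (fun j => L0 (nontgt n m j)) (restState x α) r') r = 0) :
    ∀ r, (G + H * dOf O0 r) * layerAct (fun j => L0 (nontgt n m j)) (restState x α) r = 0 := by
  have hpt := combzero (fun j => L1 (nontgt n m j)) hL1 G H _ _ hz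
  intro r
  have h := hpt r
  have he0ne : e0 r ≠ 0 := by rcases he0pm r with h1 | h1 <;> rw [h1] <;> norm_num
  have h2 : e0 r * ((G + H * dOf O0 r) *
      layerAct (fun j => L0 (nontgt n m j)) (restState x α) r) = 0 := by
    linear_combination h
  rcases mul_eq_zero.1 h2 with h3 | h3
  · exact absurd h3 he0ne
  · exact h3

theorem target_not_pass_through (n m : ℕ) (hn : 2 ≤ n)
    (C : QAC (1 + n + m) 2) (h : WeaklyComputes n m C) :
    (∃ S ∈ C.Z 1, tgt n m ∈ S ∧ 2 ≤ S.card) ∧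
      ¬ Semiclassical (C.L 2 (tgt n m)) := by
  classical
  obtain ⟨α, hαu, hAC⟩ := h
  have hα0 : ∃ v, α v ≠ 0 := unit_ne_zero α hαu
  obtain ⟨e0, O0, he0pm, he0eq, hO0big⟩ := czsplit (C.Z 0) (C.hZ 0)
  obtain ⟨e1, O1, he1pm, he1eq, hO1big⟩ := czsplit (C.Z 1) (C.hZ 1)
  have hUu := C.hL 2 (tgt n m)
  have hWu := C.hL 1 (tgt n m)
  have hab : ¬ (C.L 0 (tgt n m) 0 0 = 0 ∧ C.L 0 (tgt n m) 1 0 = 0) :=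
    col_ne_zero (C.hL 0 (tgt n m)) 0
  have hVu : ∀ j : Fin (n + m), C.L 0 (nontgt n m j) ∈ Matrix.unitaryGroup (Fin 2) ℂ :=
    fun j => C.hL 0 _
  have hL1u : ∀ j : Fin (n + m), C.L 1 (nontgt n m j) ∈ Matrix.unitaryGroup (Fin 2) ℂ :=
    fun j => C.hL 1 _
  have hL2u : ∀ j : Fin (n + m), C.L 2 (nontgt n m j) ∈ Matrix.unitaryGroup (Fin 2) ℂ :=
    fun j => C.hL 2 _
  have he1ne : ∀ r, e1 r ≠ 0 := by
    intro r; rcases he1pm r with h1 | h1 <;> rw [h1] <;> norm_num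
  have hst4 : ∀ (x : Fin n → Bool) (t : Bool) (r : Fin (n + m) → Bool),
      (czLayerAct (C.Z 1) (layerAct (C.L 1) (czLayerAct (C.Z 0) (layerAct (C.L 0) (inState n m false x α))))) (cns t r)
        = e1 r * (if t then dOf O1 r else 1) *
          (C.L 1 (tgt n m) (bitIdx t) 0 * (C.L 0 (tgt n m) 0 0 * layerAct (fun j => C.L 1 (nontgt n m j)) (fun r' => e0 r' * layerAct (fun j => C.L 0 (nontgt n m j)) (restState x α) r') r)
           + C.L 1 (tgt n m) (bitIdx t) 1 * (C.L 0 (tgt n m) 1 0 * layerAct (fun j => C.L 1 (nontgt n m j)) (fun r' => dOf O0 r' * e0 r' * layerAct (fun j => C.L 0 (nontgt n m j)) (restState x α) r') r)) :=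
    fun x t r => st4_slice (C.L 0) (C.L 1) (C.Z 0) (C.Z 1) e0 e1 O0 O1 he0eq he1eq x α t r
  have hmaster : ∀ x : Fin n → Bool, ∃ φ : QState (n + m),
      (∀ r, layerAct (fun j => C.L 2 (nontgt n m j)) (fun r' => czLayerAct (C.Z 1) (layerAct (C.L 1) (czLayerAct (C.Z 0) (layerAct (C.L 0) (inState n m false x α)))) (cns false r')) r = (starRingEnd ℂ) (C.L 2 (tgt n m) (bitIdx (parityB x)) 0) * φ r) ∧
      (∀ r, layerAct (fun j => C.L 2 (nontgt n m j)) (fun r' => czLayerAct (C.Z 1) (layerAct (C.L 1) (czLayerAct (C.Z 0) (layerAct (C.L 0) (inState n m false x α)))) (cns true r')) r = (starRingEnd ℂ) (C.L 2 (tgt n m) (bitIdx (parityB x)) 1) * φ r) := by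
    intro x
    obtain ⟨φ, hφu, hφeq⟩ := hAC x
    refine ⟨φ, solve2 (C.hL 2 (tgt n m)) (parityB x) _ _ φ ?_⟩
    intro t r
    have h0 := hφeq (cns t r)
    rw [show C.act (inState n m false x α) = layerAct (C.L 2) (czLayerAct (C.Z 1) (layerAct (C.L 1) (czLayerAct (C.Z 0) (layerAct (C.L 0) (inState n m false x α))))) from rfl] at h0
    rw [layer_slice, Fintype.sum_bool] at h0
    simp only [cns_tgt] at h0
    rw [show (fun j => cns t r (nontgt n m j)) = r from funext fun j => cns_nontgt t r j] at h0
    exact h0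
  constructor
  · -- Goal 1 : the second CZ layer has a big gate on the target
    by_contra hno
    push_neg at hno
    have hd1c : ∃ c : ℂ, (c = 1 ∨ c = -1) ∧ ∀ r, dOf O1 r = c := by
      rcases O1 with _ | T
      · exact ⟨1, Or.inl rfl, fun r => rfl⟩
      · rcases T.eq_empty_or_nonempty with rfl | hne
        · refine ⟨-1, Or.inr rfl, fun r => ?_⟩
          simp [dOf]
        · obtain ⟨S, hS, hStgt, hScard⟩ := hO1big T rfl hne
          have := hno S hS hStgt
          omega
    obtain ⟨c, hcpm, hc⟩ := hd1c
    refine endgame hn _ hVu α hα0 O0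
      (fun ε => C.L 0 (tgt n m) 0 0 * ((starRingEnd ℂ) (C.L 2 (tgt n m) (bitIdx ε) 1) * C.L 1 (tgt n m) 0 0
        - c * ((starRingEnd ℂ) (C.L 2 (tgt n m) (bitIdx ε) 0) * C.L 1 (tgt n m) 1 0)))
      (fun ε => C.L 0 (tgt n m) 1 0 * ((starRingEnd ℂ) (C.L 2 (tgt n m) (bitIdx ε) 1) * C.L 1 (tgt n m) 0 1
        - c * ((starRingEnd ℂ) (C.L 2 (tgt n m) (bitIdx ε) 0) * C.L 1 (tgt n m) 1 1))) ?_ ?_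
    · -- the pointwise constraint
      intro x r0
      obtain ⟨φ, hX, hY⟩ := hmaster x
      have hcomb : ∀ r, (starRingEnd ℂ) (C.L 2 (tgt n m) (bitIdx (parityB x)) 1) * layerAct (fun j => C.L 2 (nontgt n m j)) (fun r' => czLayerAct (C.Z 1) (layerAct (C.L 1) (czLayerAct (C.Z 0) (layerAct (C.L 0) (inState n m false x α)))) (cns false r')) r
          + (-((starRingEnd ℂ) (C.L 2 (tgt n m) (bitIdx (parityB x)) 0))) * layerAct (fun j => C.L 2 (nontgt n m j)) (fun r' => czLayerAct (C.Z 1) (layerAct (C.L 1) (czLayerAct (C.Z 0) (layerAct (C.L 0) (inState n m false x α)))) (cns true r')) r = 0 := by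
        intro r
        rw [hX r, hY r]
        ring
      have hpt := combzero (fun j => C.L 2 (nontgt n m j)) hL2u _ _ _ _ hcomb
      have hz : ∀ r, (C.L 0 (tgt n m) 0 0 * ((starRingEnd ℂ) (C.L 2 (tgt n m) (bitIdx (parityB x)) 1) * C.L 1 (tgt n m) 0 0
            - c * ((starRingEnd ℂ) (C.L 2 (tgt n m) (bitIdx (parityB x)) 0) * C.L 1 (tgt n m) 1 0))) * layerAct (fun j => C.L 1 (nontgt n m j)) (fun r' => e0 r' * layerAct (fun j => C.L 0 (nontgt n m j)) (restState x α) r') r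
          + (C.L 0 (tgt n m) 1 0 * ((starRingEnd ℂ) (C.L 2 (tgt n m) (bitIdx (parityB x)) 1) * C.L 1 (tgt n m) 0 1
            - c * ((starRingEnd ℂ) (C.L 2 (tgt n m) (bitIdx (parityB x)) 0) * C.L 1 (tgt n m) 1 1))) * layerAct (fun j => C.L 1 (nontgt n m j)) (fun r' => dOf O0 r' * e0 r' * layerAct (fun j => C.L 0 (nontgt n m j)) (restState x α) r') r = 0 := by
        intro r
        have h4 := hpt r
        rw [hst4 x false r, hst4 x true r, hc r] at h4
        simp only [Bool.false_eq_true, if_false, if_true, bitIdx_false, bitIdx_true] at h4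
        have h5 : e1 r * ((C.L 0 (tgt n m) 0 0 * ((starRingEnd ℂ) (C.L 2 (tgt n m) (bitIdx (parityB x)) 1) * C.L 1 (tgt n m) 0 0
            - c * ((starRingEnd ℂ) (C.L 2 (tgt n m) (bitIdx (parityB x)) 0) * C.L 1 (tgt n m) 1 0))) * layerAct (fun j => C.L 1 (nontgt n m j)) (fun r' => e0 r' * layerAct (fun j => C.L 0 (nontgt n m j)) (restState x α) r') r
          + (C.L 0 (tgt n m) 1 0 * ((starRingEnd ℂ) (C.L 2 (tgt n m) (bitIdx (parityB x)) 1) * C.L 1 (tgt n m) 0 1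
            - c * ((starRingEnd ℂ) (C.L 2 (tgt n m) (bitIdx (parityB x)) 0) * C.L 1 (tgt n m) 1 1))) * layerAct (fun j => C.L 1 (nontgt n m j)) (fun r' => dOf O0 r' * e0 r' * layerAct (fun j => C.L 0 (nontgt n m j)) (restState x α) r') r) = 0 := by
          linear_combination h4
        rcases mul_eq_zero.1 h5 with h6 | h6
        · exact absurd h6 (he1ne r)
        · exact h6
      exact coreAB (C.L 0) (C.L 1) hL1u e0 he0pm O0 α x _ _ hz r0
    · -- the algebraic impossibility
      intro σ hσ hcc
      obtain ⟨hf, ht⟩ := hcc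
      simp only [bitIdx_false, bitIdx_true] at hf ht
      have hσne : σ ≠ 0 := by rcases hσ with rfl | rfl <;> norm_num
      have hcne : c ≠ 0 := by rcases hcpm with rfl | rfl <;> norm_num
      obtain ⟨hG, hH⟩ := rows2zero hUu
        (G := C.L 0 (tgt n m) 0 0 * C.L 1 (tgt n m) 0 0 - σ * (C.L 0 (tgt n m) 1 0 * C.L 1 (tgt n m) 0 1))
        (H := c * (C.L 0 (tgt n m) 0 0 * C.L 1 (tgt n m) 1 0 - σ * (C.L 0 (tgt n m) 1 0 * C.L 1 (tgt n m) 1 1)))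
        (by linear_combination hf) (by linear_combination ht)
      have hH2 : C.L 0 (tgt n m) 0 0 * C.L 1 (tgt n m) 1 0
          - σ * (C.L 0 (tgt n m) 1 0 * C.L 1 (tgt n m) 1 1) = 0 := by
        rcases mul_eq_zero.1 hH with h' | h'
        · exact absurd h' hcne
        · exact h'
      obtain ⟨ha, hb⟩ := unitary_mulvec_zero' hWu
        (v0 := C.L 0 (tgt n m) 0 0) (v1 := -(σ * C.L 0 (tgt n m) 1 0))
        (by linear_combination hG) (by linear_combination hH2)
      refine hab ⟨ha, ?_⟩
      have := neg_eq_zero.1 hb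
      rcases mul_eq_zero.1 this with h' | h'
      · exact absurd h' hσne
      · exact h'
  · -- Goal 2 : the final target gate is not semiclassical
    intro hsc
    rcases semiclassical_cases hUu hsc with ⟨hz1, hz2⟩ | ⟨hz1, hz2⟩
    · refine endgame hn _ hVu α hα0 O0
        (fun ε => if ε then C.L 1 (tgt n m) 1 0 * C.L 0 (tgt n m) 0 0 else C.L 1 (tgt n m) 0 0 * C.L 0 (tgt n m) 0 0)
        (fun ε => if ε then C.L 1 (tgt n m) 1 1 * C.L 0 (tgt n m) 1 0 else C.L 1 (tgt n m) 0 1 * C.L 0 (tgt n m) 1 0) ?_ ?_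
      · intro x r0
        obtain ⟨φ, hX, hY⟩ := hmaster x
        cases hp : parityB x
        · have hXY0 : ∀ r, layerAct (fun j => C.L 2 (nontgt n m j)) (fun r' => czLayerAct (C.Z 1) (layerAct (C.L 1) (czLayerAct (C.Z 0) (layerAct (C.L 0) (inState n m false x α)))) (cns false r')) r = 0 := by
            intro r
            rw [hX r, hp]
            simp [hz1]
          have hpt := layerAct_eq_zero (fun j => C.L 2 (nontgt n m j)) hL2u hXY0
          have hz : ∀ r, (C.L 1 (tgt n m) 0 0 * C.L 0 (tgt n m) 0 0) * layerAct (fun j => C.L 1 (nontgt n m j)) (fun r' => e0 r' * layerAct (fun j => C.L 0 (nontgt n m j)) (restState x α) r') r + (C.L 1 (tgt n m) 0 1 * C.L 0 (tgt n m) 1 0) * layerAct (fun j => C.L 1 (nontgt n m j)) (fun r' => dOf O0 r' * e0 r' * layerAct (fun j => C.L 0 (nontgt n m j)) (restState x α) r') r = 0 := by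
            intro r
            have h4 := hpt r
            rw [hst4 x false r] at h4
            simp only [Bool.false_eq_true, if_false, if_true, bitIdx_false, bitIdx_true] at h4
            have h5 : e1 r * ((C.L 1 (tgt n m) 0 0 * C.L 0 (tgt n m) 0 0) * layerAct (fun j => C.L 1 (nontgt n m j)) (fun r' => e0 r' * layerAct (fun j => C.L 0 (nontgt n m j)) (restState x α) r') r + (C.L 1 (tgt n m) 0 1 * C.L 0 (tgt n m) 1 0) * layerAct (fun j => C.L 1 (nontgt n m j)) (fun r' => dOf O0 r' * e0 r' * layerAct (fun j => C.L 0 (nontgt n m j)) (restState x α) r') r) = 0 := by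
              linear_combination h4
            rcases mul_eq_zero.1 h5 with h6 | h6
            · exact absurd h6 (he1ne r)
            · exact h6
          have hfin := coreAB (C.L 0) (C.L 1) hL1u e0 he0pm O0 α x _ _ hz r0
          simpa using hfin
        · have hXY0 : ∀ r, layerAct (fun j => C.L 2 (nontgt n m j)) (fun r' => czLayerAct (C.Z 1) (layerAct (C.L 1) (czLayerAct (C.Z 0) (layerAct (C.L 0) (inState n m false x α)))) (cns true r')) r = 0 := by
            intro r
            rw [hY r, hp]
            simp [hz2]
          have hpt := layerAct_eq_zero (fun j => C.L 2 (nontgt n m j)) hL2u hXY0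
          have hz : ∀ r, (C.L 1 (tgt n m) 1 0 * C.L 0 (tgt n m) 0 0) * layerAct (fun j => C.L 1 (nontgt n m j)) (fun r' => e0 r' * layerAct (fun j => C.L 0 (nontgt n m j)) (restState x α) r') r + (C.L 1 (tgt n m) 1 1 * C.L 0 (tgt n m) 1 0) * layerAct (fun j => C.L 1 (nontgt n m j)) (fun r' => dOf O0 r' * e0 r' * layerAct (fun j => C.L 0 (nontgt n m j)) (restState x α) r') r = 0 := by
            intro r
            have h4 := hpt r
            rw [hst4 x true r] at h4
            simp only [Bool.false_eq_true, if_false, if_true, bitIdx_false, bitIdx_true] at h4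
            have h5 : (e1 r * dOf O1 r) * ((C.L 1 (tgt n m) 1 0 * C.L 0 (tgt n m) 0 0) * layerAct (fun j => C.L 1 (nontgt n m j)) (fun r' => e0 r' * layerAct (fun j => C.L 0 (nontgt n m j)) (restState x α) r') r + (C.L 1 (tgt n m) 1 1 * C.L 0 (tgt n m) 1 0) * layerAct (fun j => C.L 1 (nontgt n m j)) (fun r' => dOf O0 r' * e0 r' * layerAct (fun j => C.L 0 (nontgt n m j)) (restState x α) r') r) = 0 := by
              linear_combination h4
            rcases mul_eq_zero.1 h5 with h6 | h6
            · exact absurd h6 (mul_ne_zero (he1ne r) (dOf_ne_zero O1 r))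
            · exact h6
          have hfin := coreAB (C.L 0) (C.L 1) hL1u e0 he0pm O0 α x _ _ hz r0
          simpa using hfin
      · intro σ hσ hcc
        obtain ⟨hf, ht⟩ := hcc
        simp only [if_true, if_false, Bool.false_eq_true] at hf ht
        have hσne : σ ≠ 0 := by rcases hσ with rfl | rfl <;> norm_num
        obtain ⟨ha, hb⟩ := unitary_mulvec_zero' hWu
          (v0 := C.L 0 (tgt n m) 0 0) (v1 := -(σ * C.L 0 (tgt n m) 1 0))
          (by linear_combination hf) (by linear_combination ht)
        refine hab ⟨ha, ?_⟩
        have := neg_eq_zero.1 hb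
        rcases mul_eq_zero.1 this with h' | h'
        · exact absurd h' hσne
        · exact h'
    · refine endgame hn _ hVu α hα0 O0
        (fun ε => if ε then C.L 1 (tgt n m) 0 0 * C.L 0 (tgt n m) 0 0 else C.L 1 (tgt n m) 1 0 * C.L 0 (tgt n m) 0 0)
        (fun ε => if ε then C.L 1 (tgt n m) 0 1 * C.L 0 (tgt n m) 1 0 else C.L 1 (tgt n m) 1 1 * C.L 0 (tgt n m) 1 0) ?_ ?_
      · intro x r0
        obtain ⟨φ, hX, hY⟩ := hmaster x
        cases hp : parityB x
        · have hXY0 : ∀ r, layerAct (fun j => C.L 2 (nontgt n m j)) (fun r' => czLayerAct (C.Z 1) (layerAct (C.L 1) (czLayerAct (C.Z 0) (layerAct (C.L 0) (inState n m false x α)))) (cns true r')) r = 0 := by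
            intro r
            rw [hY r, hp]
            simp [hz1]
          have hpt := layerAct_eq_zero (fun j => C.L 2 (nontgt n m j)) hL2u hXY0
          have hz : ∀ r, (C.L 1 (tgt n m) 1 0 * C.L 0 (tgt n m) 0 0) * layerAct (fun j => C.L 1 (nontgt n m j)) (fun r' => e0 r' * layerAct (fun j => C.L 0 (nontgt n m j)) (restState x α) r') r + (C.L 1 (tgt n m) 1 1 * C.L 0 (tgt n m) 1 0) * layerAct (fun j => C.L 1 (nontgt n m j)) (fun r' => dOf O0 r' * e0 r' * layerAct (fun j => C.L 0 (nontgt n m j)) (restState x α) r') r = 0 := by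
            intro r
            have h4 := hpt r
            rw [hst4 x true r] at h4
            simp only [Bool.false_eq_true, if_false, if_true, bitIdx_false, bitIdx_true] at h4
            have h5 : (e1 r * dOf O1 r) * ((C.L 1 (tgt n m) 1 0 * C.L 0 (tgt n m) 0 0) * layerAct (fun j => C.L 1 (nontgt n m j)) (fun r' => e0 r' * layerAct (fun j => C.L 0 (nontgt n m j)) (restState x α) r') r + (C.L 1 (tgt n m) 1 1 * C.L 0 (tgt n m) 1 0) * layerAct (fun j => C.L 1 (nontgt n m j)) (fun r' => dOf O0 r' * e0 r' * layerAct (fun j => C.L 0 (nontgt n m j)) (restState x α) r') r) = 0 := by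
              linear_combination h4
            rcases mul_eq_zero.1 h5 with h6 | h6
            · exact absurd h6 (mul_ne_zero (he1ne r) (dOf_ne_zero O1 r))
            · exact h6
          have hfin := coreAB (C.L 0) (C.L 1) hL1u e0 he0pm O0 α x _ _ hz r0
          simpa using hfin
        · have hXY0 : ∀ r, layerAct (fun j => C.L 2 (nontgt n m j)) (fun r' => czLayerAct (C.Z 1) (layerAct (C.L 1) (czLayerAct (C.Z 0) (layerAct (C.L 0) (inState n m false x α)))) (cns false r')) r = 0 := by
            intro r
            rw [hX r, hp]
            simp [hz2]
          have hpt := layerAct_eq_zero (fun j => C.L 2 (nontgt n m j)) hL2u hXY0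
          have hz : ∀ r, (C.L 1 (tgt n m) 0 0 * C.L 0 (tgt n m) 0 0) * layerAct (fun j => C.L 1 (nontgt n m j)) (fun r' => e0 r' * layerAct (fun j => C.L 0 (nontgt n m j)) (restState x α) r') r + (C.L 1 (tgt n m) 0 1 * C.L 0 (tgt n m) 1 0) * layerAct (fun j => C.L 1 (nontgt n m j)) (fun r' => dOf O0 r' * e0 r' * layerAct (fun j => C.L 0 (nontgt n m j)) (restState x α) r') r = 0 := by
            intro r
            have h4 := hpt r
            rw [hst4 x false r] at h4
            simp only [Bool.false_eq_true, if_false, if_true, bitIdx_false, bitIdx_true] at h4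
            have h5 : e1 r * ((C.L 1 (tgt n m) 0 0 * C.L 0 (tgt n m) 0 0) * layerAct (fun j => C.L 1 (nontgt n m j)) (fun r' => e0 r' * layerAct (fun j => C.L 0 (nontgt n m j)) (restState x α) r') r + (C.L 1 (tgt n m) 0 1 * C.L 0 (tgt n m) 1 0) * layerAct (fun j => C.L 1 (nontgt n m j)) (fun r' => dOf O0 r' * e0 r' * layerAct (fun j => C.L 0 (nontgt n m j)) (restState x α) r') r) = 0 := by
              linear_combination h4
            rcases mul_eq_zero.1 h5 with h6 | h6
            · exact absurd h6 (he1ne r)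
            · exact h6
          have hfin := coreAB (C.L 0) (C.L 1) hL1u e0 he0pm O0 α x _ _ hz r0
          simpa using hfin
      · intro σ hσ hcc
        obtain ⟨hf, ht⟩ := hcc
        simp only [if_true, if_false, Bool.false_eq_true] at hf ht
        have hσne : σ ≠ 0 := by rcases hσ with rfl | rfl <;> norm_num
        obtain ⟨ha, hb⟩ := unitary_mulvec_zero' hWu
          (v0 := C.L 0 (tgt n m) 0 0) (v1 := -(σ * C.L 0 (tgt n m) 1 0))
          (by linear_combination ht) (by linear_combination hf)
        refine hab ⟨ha, ?_⟩
        have := neg_eq_zero.1 hb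
        rcases mul_eq_zero.1 this with h' | h'
        · exact absurd h' hσne
        · exact h'
end

section
/- There exists a depth-2 QAC circuit on 4 qubits (n = 3 input qubits, m = 0 ancillas) that computes the parity function ⊕_3, i.e., for every x ∈ {0,1}^3 there exists a unit vector φ_x ∈ ℂ^({0,1}^3) such that C(|0⟩⊗|x⟩) = |⊕x⟩⊗φ_x. -/
open scoped BigOperators

/-! Conjugating `CZ₂₃` by Hadamards on qubit `2` is a CNOT, which replaces `x₁` by
`x₁ ⊕ x₂`. Meanwhile the target, put into `|+⟩` by a Hadamard, only picks up the phases
`(-1)^x₀` from `CZ₀₁` and `(-1)^(x₁ ⊕ x₂)` from `CZ₀₂`; a final Hadamard turns the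
accumulated phase `(-1)^(x₀ ⊕ x₁ ⊕ x₂)` into the bit `x₀ ⊕ x₁ ⊕ x₂`. -/

open Function

def boolSign (b : Bool) : ℂ := if b then -1 else 1

@[simp] lemma boolSign_false : boolSign false = 1 := rfl

@[simp] lemma boolSign_true : boolSign true = -1 := rfl

lemma boolSign_xor (a b : Bool) : boolSign (a ^^ b) = boolSign a * boolSign b := by
  cases a <;> cases b <;> simp

noncomputable def invSqrtTwo : ℂ := ((Real.sqrt 2)⁻¹ : ℝ)

lemma invSqrtTwo_mul_self : invSqrtTwo * invSqrtTwo = 1 / 2 := by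
  rw [invSqrtTwo, ← Complex.ofReal_mul, ← mul_inv, Real.mul_self_sqrt zero_le_two]
  norm_num

noncomputable def hadamard : Matrix (Fin 2) (Fin 2) ℂ :=
  !![invSqrtTwo, invSqrtTwo; invSqrtTwo, -invSqrtTwo]

lemma hadamard_mem_unitaryGroup : hadamard ∈ Matrix.unitaryGroup (Fin 2) ℂ := by
  have h : starRingEnd ℂ invSqrtTwo = invSqrtTwo := Complex.conj_ofReal _
  rw [Matrix.mem_unitaryGroup_iff]
  ext i j
  fin_cases i <;> fin_cases j <;>
    simp [hadamard, Matrix.mul_apply, Matrix.star_apply, h, invSqrtTwo_mul_self] <;> norm_num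

lemma hadamard_bitIdx (a b : Bool) :
    hadamard (bitIdx a) (bitIdx b) = invSqrtTwo * boolSign (a && b) := by
  cases a <;> cases b <;> simp [hadamard, bitIdx]

lemma one_bitIdx (a b : Bool) :
    (1 : Matrix (Fin 2) (Fin 2) ℂ) (bitIdx a) (bitIdx b) = if a = b then 1 else 0 := by
  cases a <;> cases b <;> simp [bitIdx]

section

variable {N : ℕ}

def basisState (z : Fin N → Bool) : QState N := fun y => if y = z then 1 else 0

lemma unitVec_basisState (z : Fin N → Bool) : UnitVec (basisState z) := by
  simp [UnitVec, basisState, apply_ite]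

lemma czGate_pair_apply {a b : Fin N} (ψ : QState N) (y : Fin N → Bool) :
    czGate {a, b} ψ y = boolSign (y a && y b) * ψ y := by
  by_cases ha : y a <;> by_cases hb : y b <;> simp [czGate, ha, hb]

lemma layerAct_basisState (U : Fin N → Matrix (Fin 2) (Fin 2) ℂ) (z y : Fin N → Bool) :
    layerAct U (basisState z) y = ∏ j, U j (bitIdx (y j)) (bitIdx (z j)) := by
  simp [layerAct, basisState]

lemma layerAct_eq_sum_update {U : Fin N → Matrix (Fin 2) (Fin 2) ℂ} {k : Fin N}
    (hU : ∀ j ≠ k, U j = 1) (ψ : QState N) (x : Fin N → Bool) :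
    layerAct U ψ x = ∑ c, U k (bitIdx (x k)) (bitIdx c) * ψ (update x k c) := by
  have hprod (y : Fin N → Bool) : ∏ j, U j (bitIdx (x j)) (bitIdx (y j)) =
      ∑ c, if y = update x k c then U k (bitIdx (x k)) (bitIdx c) else 0 := by
    rw [← Finset.mul_prod_erase _ _ (Finset.mem_univ k)]
    simp only [eq_update_iff, ite_and, Fintype.sum_ite_eq]
    rw [Finset.prod_congr rfl fun j hj => by
      rw [hU j (Finset.ne_of_mem_erase hj), one_bitIdx], Finset.prod_boole]
    simp [eq_comm]
  simp only [layerAct, hprod, Finset.sum_mul, ite_mul, zero_mul]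
  rw [Finset.sum_comm]
  simp

lemma layerAct_hadamard_phase {U : Fin N → Matrix (Fin 2) (Fin 2) ℂ} {k : Fin N}
    (hU : ∀ j ≠ k, U j = 1) (hk : U k = hadamard) (b : Bool) {g : QState N}
    (hg : ∀ y c, g (update y k c) = g y) :
    layerAct U (fun y => invSqrtTwo * boolSign (y k && b) * g y) =
      fun y => if y k = b then g y else 0 := by
  funext y
  rw [layerAct_eq_sum_update hU]
  simp only [Fintype.sum_bool, hk, hadamard_bitIdx, update_self, hg]
  cases y k <;> cases b <;> simp <;> linear_combination (2 * g y) * invSqrtTwo_mul_self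

lemma QAC.act_depth_two (C : QAC N 2) (ψ : QState N) :
    C.act ψ = layerAct (C.L 2) (czLayerAct (C.Z 1)
      (layerAct (C.L 1) (czLayerAct (C.Z 0) (layerAct (C.L 0) ψ)))) := rfl

end

noncomputable def parityCircuit : QAC (1 + 3 + 0) 2 where
  L := ![![hadamard, 1, hadamard, 1], ![1, 1, hadamard, 1], ![hadamard, 1, 1, 1]]
  hL i j := by
    fin_cases i <;> fin_cases j
    all_goals first | exact hadamard_mem_unitaryGroup | exact one_mem _
  Z := ![[{0, 1}, {2, 3}], [{0, 2}]]
  hZ i := by fin_cases i <;> decide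

section

variable (x : Fin 3 → Bool)

noncomputable def parityWitness : QState 3 := basisState ![x 0, x 1 ^^ x 2, x 2]

lemma inState_eq_basisState :
    inState 3 0 false x (zeroAnc 0) = basisState ![false, x 0, x 1, x 2] := by
  funext y
  simp [inState, zeroAnc, basisState, funext_iff, Fin.forall_fin_succ, tgt, inp]

lemma parityB_three : parityB x = (x 0 ^^ (x 1 ^^ x 2)) := by
  cases h0 : x 0 <;> cases h1 : x 1 <;> cases h2 : x 2 <;>
    simp only [parityB, Fin.sum_univ_three, h0, h1, h2] <;> rfl

lemma parityWitness_apply (y : Fin (1 + 3 + 0) → Bool) :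
    parityWitness x (fun j => y (nontgt 3 0 j)) =
      if y 1 = x 0 ∧ y 2 = (x 1 ^^ x 2) ∧ y 3 = x 2 then 1 else 0 := by
  simp [parityWitness, basisState, funext_iff, Fin.forall_fin_succ, nontgt]

lemma parityCircuit_round_one : czLayerAct [{0, 1}, {2, 3}]
    (layerAct ![hadamard, 1, hadamard, 1] (basisState ![false, x 0, x 1, x 2])) = fun y =>
      invSqrtTwo * boolSign (y 2 && (x 1 ^^ x 2)) *
        (invSqrtTwo * boolSign (y 0 && x 0) * if y 1 = x 0 ∧ y 3 = x 2 then 1 else 0) := by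
  funext y
  simp only [czLayerAct, List.foldr, czGate_pair_apply, layerAct_basisState, Fin.prod_univ_four,
    Matrix.cons_val_zero, Matrix.cons_val_one, Matrix.cons_val_two, Matrix.cons_val_three,
    Matrix.head_cons, Matrix.tail_cons, hadamard_bitIdx, one_bitIdx]
  by_cases h1 : y 1 = x 0 <;> by_cases h3 : y 3 = x 2
  · simp only [h1, h3, if_true, and_self, Bool.and_false, boolSign_false,
      Bool.and_xor_distrib_left, boolSign_xor]
    ring
  all_goals simp [h1, h3]

lemma parityCircuit_act :
    parityCircuit.act (basisState ![false, x 0, x 1, x 2]) = fun y =>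
      if y 0 = (x 0 ^^ (x 1 ^^ x 2)) then parityWitness x (fun j => y (nontgt 3 0 j)) else 0 := by
  have hU0 : ∀ j ≠ 0, ![hadamard, 1, 1, 1] j = 1 := by
    intro j hj; fin_cases j <;> first | rfl | exact absurd rfl hj
  have hU2 : ∀ j ≠ 2, ![1, 1, hadamard, 1] j = 1 := by
    intro j hj; fin_cases j <;> first | rfl | exact absurd rfl hj
  have layer1 := layerAct_hadamard_phase hU2 rfl (x 1 ^^ x 2)
    (g := fun y => invSqrtTwo * boolSign (y 0 && x 0) * if y 1 = x 0 ∧ y 3 = x 2 then 1 else 0)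
    (by intro y c; simp)
  have layer2 : czLayerAct [{0, 2}] (fun y => if y 2 = (x 1 ^^ x 2) then
        invSqrtTwo * boolSign (y 0 && x 0) * (if y 1 = x 0 ∧ y 3 = x 2 then 1 else 0) else 0) =
      fun y => invSqrtTwo * boolSign (y 0 && (x 0 ^^ (x 1 ^^ x 2))) *
        parityWitness x (fun j => y (nontgt 3 0 j)) := by
    funext y
    simp only [czLayerAct, List.foldr, czGate_pair_apply, parityWitness_apply]
    by_cases h2 : y 2 = (x 1 ^^ x 2)
    · simp only [h2, if_true, true_and, Bool.and_xor_distrib_left, boolSign_xor]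
      split_ifs <;> ring
    · simp [h2]
  have layer3 := layerAct_hadamard_phase hU0 rfl (x 0 ^^ (x 1 ^^ x 2))
    (g := fun y => parityWitness x (fun j => y (nontgt 3 0 j)))
    (fun y c => congrArg _ (funext fun j => update_of_ne (Fin.ne_of_val_ne (by simp [nontgt])) _ _))
  rw [QAC.act_depth_two]
  dsimp only [parityCircuit, Matrix.cons_val_zero, Matrix.cons_val_one, Matrix.cons_val_two,
    Matrix.head_cons, Matrix.tail_cons]
  rw [parityCircuit_round_one, layer1, layer2]
  exact layer3

end

theorem depth_two_computes_parity_three :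
    ∃ C : QAC (1 + 3 + 0) 2, Computes 3 0 C := by
  refine ⟨parityCircuit, fun x => ⟨parityWitness x, unitVec_basisState _, fun y => ?_⟩⟩
  rw [inState_eq_basisState, parityCircuit_act, parityB_three, ite_mul, one_mul, zero_mul]
  rfl
end
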